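/- arXiv:1208.3504 — 12 statements merged into one kernel-verified Lean document; each statement's English description precedes it below -/
import Mathlib

section
/- Let (P,≤) be a poset and A, C disjoint subsets of P such that A is a downset, C is an upset, and every element of A is strictly below every element of C. Let B = P \ (A ∪ C). Define a relation ⪯ on P by: x ⪯ y iff (x,y are both in A, both in B, or both in C, and x ≤ y), or (x ∈ B, y ∈ A, and x,y are incomparable in ≤), or (x ∈ C and y ∈ A), or (x ∈ C, y ∈ B, and x,y are incomparable in ≤). Then ⪯ is a partial order on P. -/
universe u

variable {P : Type u}

/-- `A` is a downset (downward closed set) w.r.t. the relation `le`. -/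
def IsDownset (le : P → P → Prop) (A : Set P) : Prop :=
  ∀ ⦃x⦄, x ∈ A → ∀ ⦃y⦄, le y x → y ∈ A

/-- `C` is an upset (upward closed set) w.r.t. the relation `le`. -/
def IsUpset (le : P → P → Prop) (C : Set P) : Prop :=
  ∀ ⦃x⦄, x ∈ C → ∀ ⦃y⦄, le x y → y ∈ C

/-- `x` and `y` are incomparable w.r.t. `le`. -/
def Incomp (le : P → P → Prop) (x y : P) : Prop := ¬ le x y ∧ ¬ le y x

/-- Strictly less: `le x y` and `x ≠ y`. -/
def SLT (le : P → P → Prop) (x y : P) : Prop := le x y ∧ x ≠ y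

/-- The conditions under which the rotation `R_{A,C}` is defined:
`A`, `C` disjoint, `A` a downset, `C` an upset, and every element of `A`
strictly below every element of `C`. -/
def RotOK (le : P → P → Prop) (A C : Set P) : Prop :=
  Disjoint A C ∧ IsDownset le A ∧ IsUpset le C ∧
    ∀ a ∈ A, ∀ c ∈ C, le a c ∧ a ≠ c

/-- The rotation `R_{A,C}` of the relation `le`; the middle block `B` is the
complement of `A ∪ C`. -/
def Rot (le : P → P → Prop) (A C : Set P) : P → P → Prop := fun x y =>
  (((x ∈ A ∧ y ∈ A) ∨ (x ∉ A ∧ x ∉ C ∧ y ∉ A ∧ y ∉ C) ∨ (x ∈ C ∧ y ∈ C)) ∧ le x y) ∨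
  (x ∉ A ∧ x ∉ C ∧ y ∈ A ∧ Incomp le x y) ∨
  (x ∈ C ∧ y ∈ A) ∨
  (x ∈ C ∧ y ∉ A ∧ y ∉ C ∧ Incomp le x y)

/-- One rotation step between two relations on the same domain. -/
def RotStep (le le' : P → P → Prop) : Prop :=
  ∃ A C, RotOK le A C ∧ le' = Rot le A C

/-- Rotation-equivalence: the reflexive-transitive closure of rotation steps. -/
def RotEquiv (le le' : P → P → Prop) : Prop :=
  Relation.ReflTransGen RotStep le le'

/-- Restriction of a relation to a subset (as a relation on the subtype). -/
def restrictRel (le : P → P → Prop) (S : Set P) : S → S → Prop :=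
  fun x y => le x.1 y.1

/-- The set of maximal elements of a relation. -/
def maxSet (le : P → P → Prop) : Set P := {x | ∀ y, le x y → y = x}

/-- The rotation class `O₂` of a three element poset `{a,b,c}`:
chains `a<b<c`, `b<c<a`, `c<a<b`, and the posets with single comparability
`a<b`, `b<c`, `c<a`. -/
def O2rel (le : P → P → Prop) (a b c : P) : Prop :=
  (SLT le a b ∧ SLT le b c) ∨ (SLT le b c ∧ SLT le c a) ∨ (SLT le c a ∧ SLT le a b) ∨
  (SLT le a b ∧ Incomp le a c ∧ Incomp le b c) ∨
  (SLT le b c ∧ Incomp le b a ∧ Incomp le c a) ∨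
  (SLT le c a ∧ Incomp le c b ∧ Incomp le a b)

/-- The rotation class `O₃`: the dual of `O₂`. -/
def O3rel (le : P → P → Prop) (a b c : P) : Prop := O2rel le c b a

/-- The rotation class `O₁`: the antichain together with the `V` and `Λ` shaped
three element posets. -/
def O1rel (le : P → P → Prop) (a b c : P) : Prop :=
  (Incomp le a b ∧ Incomp le b c ∧ Incomp le a c) ∨
  (SLT le a b ∧ SLT le a c ∧ Incomp le b c) ∨
  (SLT le b a ∧ SLT le b c ∧ Incomp le a c) ∨
  (SLT le c a ∧ SLT le c b ∧ Incomp le a b) ∨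
  (SLT le b a ∧ SLT le c a ∧ Incomp le b c) ∨
  (SLT le a b ∧ SLT le c b ∧ Incomp le a c) ∨
  (SLT le a c ∧ SLT le b c ∧ Incomp le a b)

/-- The extension property (EXT) characterizing the random poset: every
one-point extension of a finite subposet is realized by some element. -/
def ExtProp (le : P → P → Prop) : Prop :=
  ∀ Q : Set P, Q.Finite → ∀ D U : Set P, D ⊆ Q → U ⊆ Q → Disjoint D U →
    (∀ x ∈ Q, ∀ d ∈ D, le x d → x ∈ D) →
    (∀ x ∈ Q, ∀ u ∈ U, le u x → x ∈ U) →
    (∀ d ∈ D, ∀ u ∈ U, le d u ∧ d ≠ u) →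
    ∃ s, s ∉ Q ∧ (∀ d ∈ D, le d s ∧ d ≠ s) ∧ (∀ u ∈ U, le s u ∧ s ≠ u) ∧
      ∀ x ∈ Q, x ∉ D → x ∉ U → Incomp le s x


/-
Rotation stacks the three blocks as `C` below `B` below `A`. Within a block `⪯` is `≤`,
and `⪯` never relates an element to one of a lower block, which gives antisymmetry. For
transitivity across blocks, a pair moving up a block is never `≤`-related upwards (`A` is a
downset, `C` an upset), and it cannot be `≤`-related downwards either, since composing with
the `≤`-step inside a block would contradict an incomparability already known.
-/

section Rotation

variable {le : P → P → Prop} {A C : Set P} {x y z : P}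

theorem IsDownset.not_le_of_not_mem (hA : IsDownset le A) (hy : y ∈ A) (hx : x ∉ A) :
    ¬ le x y :=
  fun h => hx (hA hy h)

theorem IsUpset.not_le_of_not_mem (hC : IsUpset le C) (hx : x ∈ C) (hy : y ∉ C) :
    ¬ le x y :=
  fun h => hy (hC hx h)

theorem Incomp.of_le_right [IsTrans P le] (hxy : Incomp le x y) (hyz : le y z)
    (hxz : ¬ le x z) : Incomp le x z :=
  ⟨hxz, fun hzx => hxy.2 (_root_.trans hyz hzx)⟩

theorem Incomp.of_le_left [IsTrans P le] (hxy : le x y) (hyz : Incomp le y z)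
    (hxz : ¬ le x z) : Incomp le x z :=
  ⟨hxz, fun hzx => hyz.2 (_root_.trans hzx hxy)⟩

theorem rot_self [Std.Refl le] (x : P) : Rot le A C x x :=
  Or.inl ⟨by tauto, refl_of le x⟩

theorem rot_iff_of_mem_A (hd : Disjoint A C) (hx : x ∈ A) :
    Rot le A C x y ↔ y ∈ A ∧ le x y := by
  have hxC : x ∉ C := Set.disjoint_left.mp hd hx
  simp only [Rot]
  tauto

theorem rot_iff_of_mem_B (hxA : x ∉ A) (hxC : x ∉ C) :
    Rot le A C x y ↔ (y ∉ A ∧ y ∉ C ∧ le x y) ∨ (y ∈ A ∧ Incomp le x y) := by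
  simp only [Rot]
  tauto

theorem rot_iff_of_mem_C (hd : Disjoint A C) (hx : x ∈ C) :
    Rot le A C x y ↔ (y ∈ C ∧ le x y) ∨ y ∈ A ∨ (y ∉ A ∧ y ∉ C ∧ Incomp le x y) := by
  have hxA : x ∉ A := Set.disjoint_right.mp hd hx
  simp only [Rot]
  tauto

theorem le_of_rot_of_rot (hd : Disjoint A C) (hxy : Rot le A C x y) (hyx : Rot le A C y x) :
    le x y := by
  by_cases hxA : x ∈ A
  · exact ((rot_iff_of_mem_A hd hxA).mp hxy).2
  have mem_A_of_rot {w : P} (hwA : w ∈ A) (hwx : Rot le A C w x) : x ∈ A :=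
    ((rot_iff_of_mem_A hd hwA).mp hwx).1
  by_cases hxC : x ∈ C
  · rcases (rot_iff_of_mem_C hd hxC).mp hxy with ⟨-, h⟩ | hyA | ⟨hyA, hyC, -⟩
    · exact h
    · exact absurd (mem_A_of_rot hyA hyx) hxA
    · rcases (rot_iff_of_mem_B hyA hyC).mp hyx with ⟨-, hxC', -⟩ | ⟨hxA', -⟩
      exacts [absurd hxC hxC', absurd hxA' hxA]
  · rcases (rot_iff_of_mem_B hxA hxC).mp hxy with ⟨-, -, h⟩ | ⟨hyA, -⟩
    · exact h
    · exact absurd (mem_A_of_rot hyA hyx) hxA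

theorem rot_trans [IsTrans P le] (hd : Disjoint A C) (hA : IsDownset le A) (hC : IsUpset le C)
    (hxy : Rot le A C x y) (hyz : Rot le A C y z) : Rot le A C x z := by
  by_cases hxA : x ∈ A
  · rw [rot_iff_of_mem_A hd hxA] at hxy ⊢
    rw [rot_iff_of_mem_A hd hxy.1] at hyz
    exact ⟨hyz.1, _root_.trans hxy.2 hyz.2⟩
  by_cases hxC : x ∈ C
  · rw [rot_iff_of_mem_C hd hxC] at hxy ⊢
    rcases hxy with ⟨hyC, hxy⟩ | hyA | ⟨hyA, hyC, hxy⟩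
    · rcases (rot_iff_of_mem_C hd hyC).mp hyz with ⟨hzC, hyz⟩ | hzA | ⟨hzA, hzC, hyz⟩
      · exact Or.inl ⟨hzC, _root_.trans hxy hyz⟩
      · exact Or.inr (Or.inl hzA)
      · exact Or.inr (Or.inr ⟨hzA, hzC, .of_le_left hxy hyz (hC.not_le_of_not_mem hxC hzC)⟩)
    · exact Or.inr (Or.inl ((rot_iff_of_mem_A hd hyA).mp hyz).1)
    · rcases (rot_iff_of_mem_B hyA hyC).mp hyz with ⟨hzA, hzC, hyz⟩ | ⟨hzA, -⟩
      · exact Or.inr (Or.inr ⟨hzA, hzC, hxy.of_le_right hyz (hC.not_le_of_not_mem hxC hzC)⟩)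
      · exact Or.inr (Or.inl hzA)
  · rw [rot_iff_of_mem_B hxA hxC] at hxy ⊢
    rcases hxy with ⟨hyA, hyC, hxy⟩ | ⟨hyA, hxy⟩
    · rcases (rot_iff_of_mem_B hyA hyC).mp hyz with ⟨hzA, hzC, hyz⟩ | ⟨hzA, hyz⟩
      · exact Or.inl ⟨hzA, hzC, _root_.trans hxy hyz⟩
      · exact Or.inr ⟨hzA, .of_le_left hxy hyz (hA.not_le_of_not_mem hzA hxA)⟩
    · obtain ⟨hzA, hyz⟩ := (rot_iff_of_mem_A hd hyA).mp hyz
      exact Or.inr ⟨hzA, hxy.of_le_right hyz (hA.not_le_of_not_mem hzA hxA)⟩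

end Rotation

theorem stmt0_general (le : P → P → Prop) [IsPartialOrder P le]
    (A C : Set P) (hd : Disjoint A C)
    (hA : IsDownset le A) (hC : IsUpset le C) :
    IsPartialOrder P (Rot le A C) := by
  refine { refl := rot_self, trans := fun _ _ _ => rot_trans hd hA hC, antisymm := ?_ }
  intro x y hxy hyx
  exact antisymm_of le (le_of_rot_of_rot hd hxy hyx) (le_of_rot_of_rot hd hyx hxy)

theorem stmt0 (le : P → P → Prop) [IsPartialOrder P le]
    (A C B : Set P) (hd : Disjoint A C) (hB : B = (A ∪ C)ᶜ)
    (hA : IsDownset le A) (hC : IsUpset le C)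
    (hAC : ∀ a ∈ A, ∀ c ∈ C, le a c ∧ a ≠ c) :
    IsPartialOrder P (Rot le A C) :=
  stmt0_general le A C hd hA hC
end

section
/- Let (P,≤) be a poset and A, B, C an extendible triple. Then the rotation R_{A,C} equals the composition of two cuts: R_{A,C}(P,≤) = C_{A∪B}(C_A(P,≤)), where C_X denotes the cut R_{X,∅}. -/
universe u

variable {P : Type u}

/-!
Since `A ⊆ Cᶜ`, the set `A ∪ B` is just `Cᶜ`, so the claim is that cutting off `A` and then
cutting off `Cᶜ` is the rotation `R_{A,C}`. Both relations agree with `≤` inside each block, so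
only pairs from different blocks matter. For `x ∈ C` and `y ∈ A` the first cut makes `x` and `y`
incomparable (because `y < x` in `P`), and the second cut then puts `x` below `y`; for `x ∈ C`
and `y ∈ B` the first cut changes nothing and the second one keeps exactly the incomparable
pairs, as `R_{A,C}` does.
-/

section Rotation

variable {le : P → P → Prop} {A C : Set P} {x y : P}

lemma rot_empty_iff_of_mem_iff_mem (h : x ∈ A ↔ y ∈ A) : Rot le A ∅ x y ↔ le x y := by
  simp only [Rot, Set.mem_empty_iff_false]
  tauto

lemma not_rot_empty_of_mem_of_notMem (hx : x ∈ A) (hy : y ∉ A) : ¬ Rot le A ∅ x y := by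
  simp only [Rot, Set.mem_empty_iff_false]
  tauto

lemma rot_empty_iff_of_notMem_of_mem (hx : x ∉ A) (hy : y ∈ A) :
    Rot le A ∅ x y ↔ Incomp le x y := by
  simp only [Rot, Set.mem_empty_iff_false]
  tauto

lemma rot_iff_rot_empty_of_notMem (hx : x ∉ C) (hy : y ∉ C) :
    Rot le A C x y ↔ Rot le A ∅ x y := by
  simp only [Rot, Set.mem_empty_iff_false]
  tauto

lemma rot_iff_of_mem_of_mem (hyA : y ∉ A) (hx : x ∈ C) (hy : y ∈ C) :
    Rot le A C x y ↔ le x y := by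
  simp only [Rot]
  tauto

lemma not_rot_of_notMem_of_mem (hyA : y ∉ A) (hx : x ∉ C) (hy : y ∈ C) :
    ¬ Rot le A C x y := by
  simp only [Rot]
  tauto

lemma rot_iff_of_mem_of_notMem (hxA : x ∉ A) (hx : x ∈ C) (hy : y ∉ C) :
    Rot le A C x y ↔ y ∈ A ∨ Incomp le x y := by
  simp only [Rot]
  tauto

lemma Set.union_compl_union_eq_compl (h : Disjoint A C) : A ∪ (A ∪ C)ᶜ = Cᶜ := by
  rw [Set.compl_union, Set.union_inter_distrib_left, Set.union_compl_self, Set.univ_inter,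
    Set.union_eq_right.mpr (Set.subset_compl_iff_disjoint_right.mpr h)]

namespace RotOK

lemma notMem_of_mem (h : RotOK le A C) (hx : x ∈ C) : x ∉ A :=
  Set.disjoint_right.mp h.1 hx

lemma isDownset_rot_empty_compl (h : RotOK le A C) : IsDownset (Rot le A ∅) Cᶜ := by
  intro x hx y hyx hy
  by_cases hxA : x ∈ A
  · exact ((rot_empty_iff_of_notMem_of_mem (h.notMem_of_mem hy) hxA).mp hyx).2
      (h.2.2.2 x hxA y hy).1
  · exact hx (h.2.2.1 hy
      ((rot_empty_iff_of_mem_iff_mem (iff_of_false (h.notMem_of_mem hy) hxA)).mp hyx))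

lemma incomp_rot_empty_iff_of_mem (h : RotOK le A C) (hx : x ∈ C) :
    Incomp (Rot le A ∅) x y ↔ y ∈ A ∨ Incomp le x y := by
  have hxA := h.notMem_of_mem hx
  by_cases hyA : y ∈ A
  · have hyx : le y x := (h.2.2.2 y hyA x hx).1
    simp only [Incomp, rot_empty_iff_of_notMem_of_mem hxA hyA,
      not_rot_empty_of_mem_of_notMem hyA hxA, hyA, true_or, iff_true]
    exact ⟨fun hxy => hxy.2 hyx, not_false⟩
  · simp only [Incomp, hyA, false_or, rot_empty_iff_of_mem_iff_mem (iff_of_false hxA hyA),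
      rot_empty_iff_of_mem_iff_mem (iff_of_false hyA hxA)]

lemma rot_eq_rot_rot_empty_compl (h : RotOK le A C) :
    Rot le A C = Rot (Rot le A ∅) Cᶜ ∅ := by
  funext x y
  apply propext
  have hxC' := @Set.notMem_compl_iff _ C x
  have hyC' := @Set.notMem_compl_iff _ C y
  by_cases hx : x ∈ C <;> by_cases hy : y ∈ C
  · rw [rot_iff_of_mem_of_mem (h.notMem_of_mem hy) hx hy,
      rot_empty_iff_of_mem_iff_mem (iff_of_false (hxC'.mpr hx) (hyC'.mpr hy)),
      rot_empty_iff_of_mem_iff_mem (iff_of_false (h.notMem_of_mem hx) (h.notMem_of_mem hy))]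
  · rw [rot_iff_of_mem_of_notMem (h.notMem_of_mem hx) hx hy,
      rot_empty_iff_of_notMem_of_mem (hxC'.mpr hx) hy, h.incomp_rot_empty_iff_of_mem hx]
  · exact iff_of_false (not_rot_of_notMem_of_mem (h.notMem_of_mem hy) hx hy)
      (not_rot_empty_of_mem_of_notMem hx (hyC'.mpr hy))
  · rw [rot_iff_rot_empty_of_notMem hx hy,
      rot_empty_iff_of_mem_iff_mem (A := Cᶜ) (iff_of_true hx hy)]

end RotOK

end Rotation

theorem stmt3_general (le : P → P → Prop)
    (A C B : Set P) (hB : B = (A ∪ C)ᶜ) (h : RotOK le A C) :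
    IsDownset (Rot le A ∅) (A ∪ B) ∧
    Rot le A C = Rot (Rot le A ∅) (A ∪ B) ∅ := by
  rw [hB, Set.union_compl_union_eq_compl h.1]
  exact ⟨h.isDownset_rot_empty_compl, h.rot_eq_rot_rot_empty_compl⟩

theorem stmt3 (le : P → P → Prop) [IsPartialOrder P le]
    (A C B : Set P) (hB : B = (A ∪ C)ᶜ) (h : RotOK le A C) :
    IsDownset (Rot le A ∅) (A ∪ B) ∧
    Rot le A C = Rot (Rot le A ∅) (A ∪ B) ∅ :=
  stmt3_general le A C B hB h
end

section
/- Let (P,≤) be a poset and E ⊆ F ⊆ P be downsets. Then the cut C_F equals the composition C_{F\E} ∘ C_E, i.e., C_F(P,≤) = C_{F\E}(C_E(P,≤)). -/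
set_option maxHeartbeats 2000000


universe u

variable {P : Type u}

theorem stmt4 (le : P → P → Prop) [IsPartialOrder P le]
    (E F : Set P) (hEF : E ⊆ F) (hE : IsDownset le E) (hF : IsDownset le F) :
    IsDownset (Rot le E ∅) (F \ E) ∧
    Rot le F ∅ = Rot (Rot le E ∅) (F \ E) ∅ := by
  constructor
  · intro x hx y hxy
    rcases hxy with ⟨h1, h2⟩ | ⟨hyE, hyC, hxE, _⟩ | ⟨h, _⟩ | ⟨h, _⟩
    · rcases h1 with ⟨hyE, hxE⟩ | ⟨hyE, _, hxE, _⟩ | ⟨h, _⟩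
      · exact absurd hxE hx.2
      · exact ⟨hF hx.1 h2, hyE⟩
      · exact absurd h (Set.notMem_empty _)
    · exact absurd hxE hx.2
    · exact absurd h (Set.notMem_empty _)
    · exact absurd h (Set.notMem_empty _)
  · funext x y
    have hExF : x ∈ E → x ∈ F := fun h => hEF h
    have hEyF : y ∈ E → y ∈ F := fun h => hEF h
    have hEd : le x y → y ∈ E → x ∈ E := fun h1 h2 => hE h2 h1
    have hEd' : le y x → x ∈ E → y ∈ E := fun h1 h2 => hE h2 h1
    have hFd : le x y → y ∈ F → x ∈ F := fun h1 h2 => hF h2 h1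
    have hFd' : le y x → x ∈ F → y ∈ F := fun h1 h2 => hF h2 h1
    by_cases hxE : x ∈ E <;> by_cases hyE : y ∈ E <;> by_cases hxF : x ∈ F <;>
      by_cases hyF : y ∈ F <;>
      simp only [Rot, Incomp, Set.mem_diff, Set.mem_empty_iff_false, eq_iff_iff,
        hxE, hyE, hxF, hyF, not_true_eq_false, not_false_eq_true, true_and, false_and,
        and_true, and_false, or_false, false_or, true_or, or_true, and_self,
        not_false_iff, iff_self] <;>
      tauto
end

section
/- Let (P,≤) be a poset and A ⊆ P a finite downset enumerated as a_1,…,a_k so that a_j is not strictly below a_i whenever i < j. Then the cut C_A equals the composition of singleton cuts C_{a_k} ∘ ⋯ ∘ C_{a_1}, where at each stage {a_i} is a one-element downset of the poset C_{a_{i-1}}⋯C_{a_1}(P,≤). -/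
universe u

variable {P : Type u}

/-! The cut `C_A` is `Rot le A ∅`. If `A` is a downset and `b ∉ A`, a case check shows that
cutting off `{b}` after `A` is the same as cutting off `A ∪ {b}` at once. The ordering hypothesis
makes every initial segment `{a_1, …, a_i}` of the enumeration a downset, so induction along the
list gives the composition formula; it also makes `a_i` minimal outside `{a_1, …, a_{i-1}}`, which
is exactly what `{a_i}` needs to be a downset of the partially cut poset. -/

lemma rot_empty_iff (le : P → P → Prop) (A : Set P) (x y : P) :
    Rot le A ∅ x y ↔ (x ∈ A ∧ y ∈ A ∧ le x y) ∨ (x ∉ A ∧ y ∉ A ∧ le x y) ∨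
      (x ∉ A ∧ y ∈ A ∧ Incomp le x y) := by
  simp only [Rot, Set.mem_empty_iff_false]
  tauto

lemma rot_empty_empty (le : P → P → Prop) : Rot le (∅ : Set P) ∅ = le := by
  funext x y
  simp [rot_empty_iff]

lemma rot_singleton_rot_empty (le : P → P → Prop) {A : Set P} (hA : IsDownset le A)
    {b : P} (hb : b ∉ A) : Rot (Rot le A ∅) {b} ∅ = Rot le (insert b A) ∅ := by
  funext x y
  have hbx : x ∈ A → ¬ le b x := fun hx h => hb (hA hx h)
  have hxy : y ∈ A → le x y → x ∈ A := fun hy h => hA hy h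
  rw [eq_iff_iff]
  simp only [rot_empty_iff, Set.mem_singleton_iff, Set.mem_insert_iff, Incomp]
  by_cases hx : x ∈ A <;> by_cases hy : y ∈ A <;>
    by_cases hxb : x = b <;> by_cases hyb : y = b <;> subst_vars <;>
      simp_all

lemma isDownset_singleton_rot_empty (le : P → P → Prop) {A : Set P} {b : P} (hb : b ∉ A)
    (hmin : ∀ y ∉ A, le y b → y = b) : IsDownset (Rot le A ∅) {b} := by
  rintro x rfl y hyx
  rcases (rot_empty_iff le A y x).1 hyx with ⟨-, hxA, -⟩ | ⟨hyA, -, hyx⟩ | ⟨-, hxA, -⟩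
  · exact absurd hxA hb
  · exact hmin y hyA hyx
  · exact absurd hxA hb

lemma foldl_rot_singleton_eq_rot (le : P → P → Prop) {l : List P} (hl : l.Nodup)
    (hpre : ∀ l₁, l₁ <+: l → IsDownset le {x | x ∈ l₁}) :
    l.foldl (fun r x => Rot r {x} ∅) le = Rot le {x | x ∈ l} ∅ := by
  induction l using List.reverseRecOn with
  | nil => simp [rot_empty_empty]
  | append_singleton l b ih =>
    obtain ⟨hl, -, hb⟩ := List.nodup_append.1 hl
    have hbl : b ∉ l := fun h => hb b h b (List.mem_singleton_self b) rfl
    have hset : {x | x ∈ l ++ [b]} = insert b {x | x ∈ l} := by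
      ext x; simp [or_comm]
    rw [List.foldl_append, ih hl fun l₁ h => hpre l₁ (h.trans (List.prefix_append l [b])),
      List.foldl_cons, List.foldl_nil,
      rot_singleton_rot_empty le (hpre l (List.prefix_append l [b])) hbl, hset]

section
variable {le : P → P → Prop} {k : ℕ} {a : Fin k → P}

lemma mem_take_ofFn_iff {n : ℕ} {x : P} :
    x ∈ (List.ofFn a).take n ↔ ∃ j : Fin k, (j : ℕ) < n ∧ a j = x := by
  simp only [List.mem_take_iff_getElem, List.getElem_ofFn, List.length_ofFn]
  constructor
  · rintro ⟨j, hj, rfl⟩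
    exact ⟨⟨j, by omega⟩, show j < n by omega, rfl⟩
  · rintro ⟨j, hj, rfl⟩
    exact ⟨j, by omega, rfl⟩

lemma eq_of_le_of_apply_le (ha : Function.Injective a)
    (horder : ∀ i j : Fin k, i < j → ¬ SLT le (a j) (a i)) {i j : Fin k} (hij : i ≤ j)
    (h : le (a j) (a i)) : i = j := by
  by_contra hne
  exact horder i j (lt_of_le_of_ne hij hne) ⟨h, ha.ne (Ne.symm hne)⟩

lemma isDownset_of_prefix_ofFn (ha : Function.Injective a) (hA : IsDownset le (Set.range a))
    (horder : ∀ i j : Fin k, i < j → ¬ SLT le (a j) (a i)) {l : List P}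
    (hl : l <+: List.ofFn a) : IsDownset le {x | x ∈ l} := by
  rw [List.prefix_iff_eq_take.1 hl]
  rintro _ hx y hyx
  obtain ⟨j, hj, rfl⟩ := mem_take_ofFn_iff.1 hx
  obtain ⟨m, rfl⟩ := hA ⟨j, rfl⟩ hyx
  refine mem_take_ofFn_iff.2 ⟨m, ?_, rfl⟩
  by_contra! hm
  have := eq_of_le_of_apply_le ha horder (Fin.le_def.2 (by omega)) hyx
  omega

end

theorem stmt5_general (le : P → P → Prop)
    (k : ℕ) (a : Fin k → P) (ha : Function.Injective a)
    (A : Set P) (hAa : A = Set.range a) (hA : IsDownset le A)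
    (horder : ∀ i j : Fin k, i < j → ¬ SLT le (a j) (a i)) :
    (∀ i : Fin k,
      IsDownset (((List.ofFn a).take i).foldl (fun r x => Rot r {x} ∅) le) {a i}) ∧
    Rot le A ∅ = (List.ofFn a).foldl (fun r x => Rot r {x} ∅) le := by
  subst hAa
  have hnodup : (List.ofFn a).Nodup := List.nodup_ofFn.2 ha
  have hpre (l : List P) (hl : l <+: List.ofFn a) : IsDownset le {x | x ∈ l} :=
    isDownset_of_prefix_ofFn ha hA horder hl
  refine ⟨fun i => ?_, ?_⟩
  · have hi := List.take_prefix (i : ℕ) (List.ofFn a)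
    rw [foldl_rot_singleton_eq_rot le (hnodup.sublist hi.sublist) fun l hl => hpre l (hl.trans hi)]
    refine isDownset_singleton_rot_empty le (fun h => ?_) fun y hy hyi => ?_
    · obtain ⟨j, hj, hji⟩ := mem_take_ofFn_iff.1 h
      exact Fin.ne_of_lt hj (ha hji)
    · obtain ⟨m, rfl⟩ := hA ⟨i, rfl⟩ hyi
      have him : i ≤ m := not_lt.1 fun h => hy (mem_take_ofFn_iff.2 ⟨m, h, rfl⟩)
      rw [eq_of_le_of_apply_le ha horder him hyi]
  · rw [foldl_rot_singleton_eq_rot le hnodup hpre]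
    congr
    ext x
    simp [List.mem_ofFn]

theorem stmt5 (le : P → P → Prop) [IsPartialOrder P le]
    (k : ℕ) (a : Fin k → P) (ha : Function.Injective a)
    (A : Set P) (hAa : A = Set.range a) (hA : IsDownset le A)
    (horder : ∀ i j : Fin k, i < j → ¬ SLT le (a j) (a i)) :
    (∀ i : Fin k,
      IsDownset (((List.ofFn a).take i).foldl (fun r x => Rot r {x} ∅) le) {a i}) ∧
    Rot le A ∅ = (List.ofFn a).foldl (fun r x => Rot r {x} ∅) le :=
  stmt5_general le k a ha A hAa hA horder
end

section
/- Let (P,≤) be a poset with an extendible triple A, B, C, and let (P,⪯) = R_{A,C}(P,≤). Then C is a downset of (P,⪯), A is an upset of (P,⪯), c ≺ a for all c ∈ C and a ∈ A, and R_{C,A}(P,⪯) = (P,≤). Consequently, rotation-equivalence is a symmetric relation. -/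
universe u

variable {P : Type u}

/-!
The rotation `R_{A,C}` keeps the order inside each block and turns the block structure
around: `C` goes to the bottom, `A` to the top, and between `B` and the outer blocks
comparability and incomparability are exchanged. Rotating back with `R_{C,A}` exchanges them
once more. The only comparabilities that could be lost are `c ≤ a` with `c ∈ C`, `a ∈ A`,
and these are excluded by `a < c` and antisymmetry. Rotations preserve antisymmetry, so
every step of a chain of rotations can be reversed.
-/

section Rotation

variable {le : P → P → Prop} {A C : Set P}

theorem rotOK_rot (hd : Disjoint A C) : RotOK (Rot le A C) C A := by
  have hAC : ∀ ⦃x⦄, x ∈ A → x ∉ C := Set.disjoint_left.mp hd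
  refine ⟨hd.symm, ?_, ?_, fun c hc a ha => ⟨Or.inr (Or.inr (Or.inl ⟨hc, ha⟩)), ?_⟩⟩
  · rintro x hx y (⟨_, _⟩ | _ | _ | _) <;> grind
  · rintro x hx y (⟨_, _⟩ | _ | _ | _) <;> grind
  · rintro rfl
    exact hAC ha hc

theorem antisymm_rot [Std.Antisymm le] (hd : Disjoint A C) : Std.Antisymm (Rot le A C) := by
  have hAC : ∀ ⦃x⦄, x ∈ A → x ∉ C := Set.disjoint_left.mp hd
  refine ⟨fun x y hxy hyx => ?_⟩
  rcases hxy with ⟨_, hxy⟩ | _ | _ | _ <;> rcases hyx with ⟨_, hyx⟩ | _ | _ | _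
  · exact antisymm hxy hyx
  all_goals grind

theorem rot_rot [Std.Antisymm le] (h : RotOK le A C) : Rot (Rot le A C) C A = le := by
  obtain ⟨hd, hA, hC, hlt⟩ := h
  have hAC : ∀ ⦃x⦄, x ∈ A → x ∉ C := Set.disjoint_left.mp hd
  have not_le_of_mem : ∀ ⦃c a⦄, c ∈ C → a ∈ A → ¬ le c a := fun c a hc ha hca =>
    (hlt a ha c hc).2 (antisymm (hlt a ha c hc).1 hca)
  funext x y
  apply propext
  unfold Rot Incomp
  by_cases hxA : x ∈ A <;> by_cases hxC : x ∈ C <;> by_cases hyA : y ∈ A <;> by_cases hyC : y ∈ C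
  all_goals grind [IsDownset, IsUpset]

variable {r s : P → P → Prop}

theorem RotStep.antisymm [Std.Antisymm r] (h : RotStep r s) : Std.Antisymm s := by
  obtain ⟨A, C, hAC, rfl⟩ := h
  exact antisymm_rot hAC.1

theorem RotStep.symm [Std.Antisymm r] (h : RotStep r s) : RotStep s r := by
  obtain ⟨A, C, hAC, rfl⟩ := h
  exact ⟨C, A, rotOK_rot hAC.1, (rot_rot hAC).symm⟩

theorem RotEquiv.symm [Std.Antisymm r] (h : RotEquiv r s) : RotEquiv s r := by
  suffices Std.Antisymm s ∧ RotEquiv s r from this.2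
  induction h with
  | refl => exact ⟨inferInstance, .refl⟩
  | tail _ hst ih =>
    obtain ⟨_, hsr⟩ := ih
    exact ⟨hst.antisymm, .head hst.symm hsr⟩

end Rotation

theorem stmt6_general (le : P → P → Prop) [IsPartialOrder P le]
    (A C : Set P) (h : RotOK le A C) :
    IsDownset (Rot le A C) C ∧ IsUpset (Rot le A C) A ∧
    (∀ c ∈ C, ∀ a ∈ A, Rot le A C c a ∧ c ≠ a) ∧
    Rot (Rot le A C) C A = le ∧
    ∀ (r s : P → P → Prop), IsPartialOrder P r → RotEquiv r s → RotEquiv s r := by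
  obtain ⟨-, hC, hA, hCA⟩ := rotOK_rot (le := le) h.1
  exact ⟨hC, hA, hCA, rot_rot h, fun r s _ => RotEquiv.symm⟩

theorem stmt6 (le : P → P → Prop) [IsPartialOrder P le]
    (A C B : Set P) (hB : B = (A ∪ C)ᶜ) (h : RotOK le A C) :
    IsDownset (Rot le A C) C ∧ IsUpset (Rot le A C) A ∧
    (∀ c ∈ C, ∀ a ∈ A, Rot le A C c a ∧ c ≠ a) ∧
    Rot (Rot le A C) C A = le ∧
    ∀ (r s : P → P → Prop), IsPartialOrder P r → RotEquiv r s → RotEquiv s r :=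
  stmt6_general le A C h
end

section
/- There are exactly three rotation-equivalence classes of partial orders on a fixed 3-element set {a,b,c}: the class O₁ containing the antichain together with the six 'V' and 'Λ' shaped posets (one element below the two others, or one element above the two others); the class O₂ containing the three chains a<b<c, b<c<a, c<a<b and the three posets with a single covering pair a<b (c isolated), b<c (a isolated), c<a (b isolated); and the class O₃ which is the dual of O₂. -/
universe u

variable {P : Type u}

/-!
Relabelling the three points along the bijection `![a, b, c] : Fin 3 → X` transports partial
orders, rotations and the three classes, so it suffices to treat `Fin 3` with `a, b, c = 0, 1, 2`.
There everything is a finite check, done by `decide` after replacing relations and sets by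
Boolean matrices and predicates: each class is closed under rotation steps, and each poset of a
class is one rotation step away from (and back to) a representative: the antichain, the chain
`0 < 1 < 2`, or its dual.
-/

section Decidability

variable (le : P → P → Prop) [DecidableRel le]

instance (x y : P) : Decidable (Incomp le x y) :=
  inferInstanceAs (Decidable (¬ le x y ∧ ¬ le y x))

instance [DecidableEq P] (x y : P) : Decidable (SLT le x y) :=
  inferInstanceAs (Decidable (le x y ∧ x ≠ y))

instance [DecidableEq P] (a b c : P) : Decidable (O1rel le a b c) := by
  unfold O1rel; infer_instance

instance [DecidableEq P] (a b c : P) : Decidable (O2rel le a b c) := by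
  unfold O2rel; infer_instance

instance [DecidableEq P] (a b c : P) : Decidable (O3rel le a b c) :=
  inferInstanceAs (Decidable (O2rel le c b a))

instance (A C : Set P) [DecidablePred (· ∈ A)] [DecidablePred (· ∈ C)] :
    DecidableRel (Rot le A C) :=
  fun x y => by unfold Rot; infer_instance

instance [Fintype P] [DecidableEq P] (A C : Set P) [DecidablePred (· ∈ A)]
    [DecidablePred (· ∈ C)] : Decidable (RotOK le A C) :=
  decidable_of_iff ((∀ x, x ∈ A → x ∉ C) ∧ (∀ x, x ∈ A → ∀ y, le y x → y ∈ A) ∧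
      (∀ x, x ∈ C → ∀ y, le x y → y ∈ C) ∧ ∀ a ∈ A, ∀ c ∈ C, le a c ∧ a ≠ c)
    (by rw [RotOK, Set.disjoint_left]; rfl)

omit [DecidableRel le] in
theorem isPartialOrder_iff :
    IsPartialOrder P le ↔ (∀ x, le x x) ∧ (∀ x y z, le x y → le y z → le x z) ∧
      ∀ x y, le x y → le y x → x = y :=
  ⟨fun h => ⟨h.refl, h.trans, h.antisymm⟩,
    fun ⟨hrefl, htrans, hantisymm⟩ => { refl := hrefl, trans := htrans, antisymm := hantisymm }⟩

instance [Fintype P] [DecidableEq P] : Decidable (IsPartialOrder P le) :=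
  decidable_of_iff _ (isPartialOrder_iff le).symm

omit [DecidableRel le] in
theorem rotStep_iff_exists_bool (le' : P → P → Prop) :
    RotStep le le' ↔ ∃ α γ : P → Bool, RotOK le {x | α x} {x | γ x} ∧
      ∀ x y, le' x y ↔ Rot le {x | α x} {x | γ x} x y := by
  classical
  constructor
  · rintro ⟨A, C, hAC, rfl⟩
    exact ⟨fun x => decide (x ∈ A), fun x => decide (x ∈ C), by simpa using hAC, by simp⟩
  · rintro ⟨α, γ, hAC, h⟩
    exact ⟨_, _, hAC, funext₂ fun x y => propext (h x y)⟩

instance [Fintype P] [DecidableEq P] (le' : P → P → Prop) [DecidableRel le'] :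
    Decidable (RotStep le le') :=
  decidable_of_iff _ (rotStep_iff_exists_bool le le').symm

end Decidability

section Preimage

variable {Q : Type*} {le le' : P → P → Prop}

theorem IsPartialOrder.preimage (h : IsPartialOrder P le) {f : Q → P} (hf : f.Injective) :
    IsPartialOrder Q (f ⁻¹'o le) where
  refl x := h.refl (f x)
  trans _ _ _ := h.trans _ _ _
  antisymm _ _ hxy hyx := hf (h.antisymm _ _ hxy hyx)

theorem RotOK.preimage {A C : Set P} (h : RotOK le A C) (f : Q → P) :
    RotOK (f ⁻¹'o le) (f ⁻¹' A) (f ⁻¹' C) := by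
  obtain ⟨hdisj, hdown, hup, hlt⟩ := h
  exact ⟨hdisj.preimage f, fun _ hx _ hyx => hdown hx hyx, fun _ hx _ hxy => hup hx hxy,
    fun _ hx _ hy => ⟨(hlt _ hx _ hy).1, fun hxy => (hlt _ hx _ hy).2 (congrArg f hxy)⟩⟩

theorem rot_preimage (f : Q → P) (A C : Set P) :
    Rot (f ⁻¹'o le) (f ⁻¹' A) (f ⁻¹' C) = f ⁻¹'o Rot le A C :=
  rfl

theorem RotStep.preimage (h : RotStep le le') (f : Q → P) :
    RotStep (f ⁻¹'o le) (f ⁻¹'o le') := by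
  obtain ⟨A, C, hAC, rfl⟩ := h
  exact ⟨_, _, hAC.preimage f, (rot_preimage f A C).symm⟩

theorem RotEquiv.preimage (h : RotEquiv le le') (f : Q → P) :
    RotEquiv (f ⁻¹'o le) (f ⁻¹'o le') :=
  Relation.ReflTransGen.lift (f ⁻¹'o ·) (fun _ _ hst => RotStep.preimage hst f) le le' h

theorem symm_preimage_preimage_rel (e : Q ≃ P) (le : P → P → Prop) :
    e.symm ⁻¹'o (e ⁻¹'o le) = le := by
  funext x y
  simp [Order.Preimage]

theorem rotEquiv_preimage_iff (e : Q ≃ P) :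
    RotEquiv (e ⁻¹'o le) (e ⁻¹'o le') ↔ RotEquiv le le' := by
  refine ⟨fun h => ?_, fun h => h.preimage e⟩
  simpa only [symm_preimage_preimage_rel] using h.preimage e.symm

theorem incomp_preimage (f : Q → P) (x y : Q) :
    Incomp (f ⁻¹'o le) x y ↔ Incomp le (f x) (f y) :=
  Iff.rfl

theorem slt_preimage {f : Q → P} (hf : f.Injective) (x y : Q) :
    SLT (f ⁻¹'o le) x y ↔ SLT le (f x) (f y) := by
  simp only [SLT, Order.Preimage, hf.ne_iff]

variable {f : Q → P} (hf : f.Injective) (x y z : Q)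
include hf

theorem o1rel_preimage : O1rel (f ⁻¹'o le) x y z ↔ O1rel le (f x) (f y) (f z) := by
  simp only [O1rel, slt_preimage hf, incomp_preimage]

theorem o2rel_preimage : O2rel (f ⁻¹'o le) x y z ↔ O2rel le (f x) (f y) (f z) := by
  simp only [O2rel, slt_preimage hf, incomp_preimage]

theorem o3rel_preimage : O3rel (f ⁻¹'o le) x y z ↔ O3rel le (f x) (f y) (f z) :=
  o2rel_preimage hf z y x

end Preimage

/-- Prop-valued relations cannot be enumerated by `decide`, Boolean matrices can. -/
def relOfBool (R : P → P → Bool) : P → P → Prop := fun x y => R x y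

instance (R : P → P → Bool) : DecidableRel (relOfBool R) :=
  fun x y => inferInstanceAs (Decidable (R x y = true))

theorem exists_relOfBool_eq (r : P → P → Prop) : ∃ R, relOfBool R = r := by
  classical
  exact ⟨fun x y => decide (r x y), by funext x y; simp [relOfBool]⟩

theorem exists_setOf_bool_eq (A : Set P) : ∃ α : P → Bool, {x | α x} = A := by
  classical
  exact ⟨fun x => decide (x ∈ A), by simp⟩

section Fin3

variable {r s : Fin 3 → Fin 3 → Prop}

set_option maxRecDepth 4000 in
theorem fin3_trichotomy (hr : IsPartialOrder (Fin 3) r) :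
    (O1rel r 0 1 2 ∧ ¬ O2rel r 0 1 2 ∧ ¬ O3rel r 0 1 2) ∨
    (¬ O1rel r 0 1 2 ∧ O2rel r 0 1 2 ∧ ¬ O3rel r 0 1 2) ∨
    (¬ O1rel r 0 1 2 ∧ ¬ O2rel r 0 1 2 ∧ O3rel r 0 1 2) := by
  obtain ⟨R, rfl⟩ := exists_relOfBool_eq r
  revert R
  decide

set_option maxRecDepth 4000 in
theorem fin3_rotStep_preserves (hr : IsPartialOrder (Fin 3) r) (h : RotStep r s) :
    IsPartialOrder (Fin 3) s ∧ (O1rel r 0 1 2 → O1rel s 0 1 2) ∧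
      (O2rel r 0 1 2 → O2rel s 0 1 2) ∧ (O3rel r 0 1 2 → O3rel s 0 1 2) := by
  obtain ⟨A, C, hAC, rfl⟩ := h
  obtain ⟨R, rfl⟩ := exists_relOfBool_eq r
  obtain ⟨α, rfl⟩ := exists_setOf_bool_eq A
  obtain ⟨γ, rfl⟩ := exists_setOf_bool_eq C
  revert γ α hr R
  decide

set_option maxRecDepth 4000 in
theorem fin3_rotStep_antichain (hr : IsPartialOrder (Fin 3) r) (h : O1rel r 0 1 2) :
    RotStep r (· = ·) ∧ RotStep (· = ·) r := by
  obtain ⟨R, rfl⟩ := exists_relOfBool_eq r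
  revert R
  decide

set_option maxRecDepth 4000 in
theorem fin3_rotStep_chain (hr : IsPartialOrder (Fin 3) r) (h : O2rel r 0 1 2) :
    RotStep r (· ≤ ·) ∧ RotStep (· ≤ ·) r := by
  obtain ⟨R, rfl⟩ := exists_relOfBool_eq r
  revert R
  decide

set_option maxRecDepth 4000 in
theorem fin3_rotStep_dual_chain (hr : IsPartialOrder (Fin 3) r) (h : O3rel r 0 1 2) :
    RotStep r (· ≥ ·) ∧ RotStep (· ≥ ·) r := by
  obtain ⟨R, rfl⟩ := exists_relOfBool_eq r
  revert R
  decide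

theorem fin3_rotEquiv_preserves (hr : IsPartialOrder (Fin 3) r) (h : RotEquiv r s) :
    IsPartialOrder (Fin 3) s ∧ (O1rel r 0 1 2 → O1rel s 0 1 2) ∧
      (O2rel r 0 1 2 → O2rel s 0 1 2) ∧ (O3rel r 0 1 2 → O3rel s 0 1 2) := by
  induction h with
  | refl => exact ⟨hr, id, id, id⟩
  | tail _ hst ih =>
    obtain ⟨hpo, h₁, h₂, h₃⟩ := fin3_rotStep_preserves ih.1 hst
    exact ⟨hpo, h₁ ∘ ih.2.1, h₂ ∘ ih.2.2.1, h₃ ∘ ih.2.2.2⟩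

theorem RotEquiv.of_steps {l m n : P → P → Prop} (hlm : RotStep l m) (hmn : RotStep m n) :
    RotEquiv l n :=
  (Relation.ReflTransGen.single hlm).tail hmn

theorem fin3_rotEquiv_iff (hr : IsPartialOrder (Fin 3) r) (hs : IsPartialOrder (Fin 3) s) :
    RotEquiv r s ↔ (O1rel r 0 1 2 ∧ O1rel s 0 1 2) ∨ (O2rel r 0 1 2 ∧ O2rel s 0 1 2) ∨
      (O3rel r 0 1 2 ∧ O3rel s 0 1 2) := by
  constructor
  · intro h
    obtain ⟨-, h₁, h₂, h₃⟩ := fin3_rotEquiv_preserves hr h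
    rcases fin3_trichotomy hr with ⟨hr₁, -⟩ | ⟨-, hr₂, -⟩ | ⟨-, -, hr₃⟩
    exacts [Or.inl ⟨hr₁, h₁ hr₁⟩, Or.inr (Or.inl ⟨hr₂, h₂ hr₂⟩), Or.inr (Or.inr ⟨hr₃, h₃ hr₃⟩)]
  · rintro (⟨hr₁, hs₁⟩ | ⟨hr₂, hs₂⟩ | ⟨hr₃, hs₃⟩)
    · exact .of_steps (fin3_rotStep_antichain hr hr₁).1 (fin3_rotStep_antichain hs hs₁).2
    · exact .of_steps (fin3_rotStep_chain hr hr₂).1 (fin3_rotStep_chain hs hs₂).2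
    · exact .of_steps (fin3_rotStep_dual_chain hr hr₃).1 (fin3_rotStep_dual_chain hs hs₃).2

end Fin3

theorem bijective_vecCons_three {X : Type*} {a b c : X} (hab : a ≠ b) (hbc : b ≠ c)
    (hac : a ≠ c) (hcover : ∀ x : X, x = a ∨ x = b ∨ x = c) : Function.Bijective ![a, b, c] := by
  refine ⟨fun i j h => ?_, fun x => ?_⟩
  · fin_cases i <;> fin_cases j <;> simp_all [eq_comm]
  · rcases hcover x with rfl | rfl | rfl
    exacts [⟨0, rfl⟩, ⟨1, rfl⟩, ⟨2, rfl⟩]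

theorem stmt7 {X : Type u} (a b c : X) (hab : a ≠ b) (hbc : b ≠ c) (hac : a ≠ c)
    (hcover : ∀ x : X, x = a ∨ x = b ∨ x = c) :
    (∀ r : X → X → Prop, IsPartialOrder X r →
      ((O1rel r a b c ∧ ¬ O2rel r a b c ∧ ¬ O3rel r a b c) ∨
       (¬ O1rel r a b c ∧ O2rel r a b c ∧ ¬ O3rel r a b c) ∨
       (¬ O1rel r a b c ∧ ¬ O2rel r a b c ∧ O3rel r a b c))) ∧
    (∀ r s : X → X → Prop, IsPartialOrder X r → IsPartialOrder X s →
      (RotEquiv r s ↔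
        ((O1rel r a b c ∧ O1rel s a b c) ∨ (O2rel r a b c ∧ O2rel s a b c) ∨
         (O3rel r a b c ∧ O3rel s a b c)))) := by
  let e := Equiv.ofBijective _ (bijective_vecCons_three hab hbc hac hcover)
  have hclass : ∀ r : X → X → Prop, (O1rel (e ⁻¹'o r) 0 1 2 ↔ O1rel r a b c) ∧
      (O2rel (e ⁻¹'o r) 0 1 2 ↔ O2rel r a b c) ∧ (O3rel (e ⁻¹'o r) 0 1 2 ↔ O3rel r a b c) :=
    fun r => ⟨o1rel_preimage e.injective 0 1 2, o2rel_preimage e.injective 0 1 2,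
      o3rel_preimage e.injective 0 1 2⟩
  refine ⟨fun r hr => ?_, fun r s hr hs => ?_⟩
  · simpa only [hclass] using fin3_trichotomy (hr.preimage e.injective)
  · rw [← rotEquiv_preimage_iff e,
      fin3_rotEquiv_iff (hr.preimage e.injective) (hs.preimage e.injective)]
    simp only [hclass]
end

section
/- Let (P,≤) and (P,⪯) be two finite posets on the same domain. If max(P,≤) = max(P,⪯) and for all a,b,c ∈ P the induced three-element posets ({a,b,c},≤) and ({a,b,c},⪯) are rotation-equivalent, then (P,≤) = (P,⪯). -/
/-!
On a three-element set, a case check over the blocks `A`, `B`, `C` containing the three points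
shows that a rotation keeps each of the classes `O₁`, `O₂`, `O₃` invariant; since these classes
partition the three-element posets, `≤` and `⪯` induce posets of the same class on every triple.

Let `m` be maximal and `x < m`. If `x ⋠ m`, take such an `x` maximal; `x` is not maximal for `⪯`
either, so `x ≺ w` for some `w`, and `{x, m, w}` carries the single relation `x ≺ w` under `⪯`,
a poset of class `O₃`. The only `O₃` poset with `x < m` and `m` maximal is the chain
`x < w < m`, which makes `w` a larger counterexample. So `≤` and `⪯` agree below maximal elements.
For general `x < y`, pick a maximal `m ≥ y`: the chain `x < y < m` lies in `O₂`, and the only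
`O₂` posets with `x ≺ m` and `m` maximal have `x ≺ y`.
-/

universe u

variable {P : Type u}

section Shapes

/- The classes `O1rel`, `O2rel`, `O3rel` with all six off-diagonal comparisons prescribed, so
that rotations preserve them even for relations not known to be partial orders.
`IsEdgeShape r a b c` is the single relation `a < b`. -/

variable (r : P → P → Prop)

def IsChainShape (a b c : P) : Prop :=
  r a b ∧ r b c ∧ r a c ∧ ¬ r b a ∧ ¬ r c b ∧ ¬ r c a

def IsEdgeShape (a b c : P) : Prop :=
  r a b ∧ ¬ r b a ∧ ¬ r a c ∧ ¬ r c a ∧ ¬ r b c ∧ ¬ r c b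

def IsAntichainShape (a b c : P) : Prop :=
  ¬ r a b ∧ ¬ r b a ∧ ¬ r a c ∧ ¬ r c a ∧ ¬ r b c ∧ ¬ r c b

def IsVeeShape (a b c : P) : Prop :=
  r a b ∧ r a c ∧ ¬ r b a ∧ ¬ r c a ∧ ¬ r b c ∧ ¬ r c b

def IsWedgeShape (a b c : P) : Prop :=
  r a c ∧ r b c ∧ ¬ r c a ∧ ¬ r c b ∧ ¬ r a b ∧ ¬ r b a

def O1Shape (a b c : P) : Prop :=
  IsAntichainShape r a b c ∨ IsVeeShape r a b c ∨ IsVeeShape r b a c ∨ IsVeeShape r c a b ∨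
    IsWedgeShape r a b c ∨ IsWedgeShape r a c b ∨ IsWedgeShape r b c a

def O2Shape (a b c : P) : Prop :=
  IsChainShape r a b c ∨ IsChainShape r b c a ∨ IsChainShape r c a b ∨
    IsEdgeShape r a b c ∨ IsEdgeShape r b c a ∨ IsEdgeShape r c a b

def O3Shape (a b c : P) : Prop := O2Shape r c b a

variable {r} {a b c : P}

lemma O1Shape.not_o2Shape (h : O1Shape r a b c) : ¬ O2Shape r a b c := by
  unfold O1Shape O2Shape IsAntichainShape IsVeeShape IsWedgeShape IsChainShape IsEdgeShape at *
  tauto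

lemma O1Shape.not_o3Shape (h : O1Shape r a b c) : ¬ O3Shape r a b c := by
  unfold O1Shape O3Shape O2Shape IsAntichainShape IsVeeShape IsWedgeShape IsChainShape
    IsEdgeShape at *
  tauto

lemma O2Shape.not_o3Shape (h : O2Shape r a b c) : ¬ O3Shape r a b c := by
  unfold O3Shape O2Shape IsChainShape IsEdgeShape at *
  tauto

lemma o1Shape_or_o2Shape_or_o3Shape [IsPartialOrder P r] (hab : a ≠ b) (hac : a ≠ c)
    (hbc : b ≠ c) : O1Shape r a b c ∨ O2Shape r a b c ∨ O3Shape r a b c := by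
  have : r a b → r b c → r a c := _root_.trans
  have : r a c → r c b → r a b := _root_.trans
  have : r b a → r a c → r b c := _root_.trans
  have : r b c → r c a → r b a := _root_.trans
  have : r c a → r a b → r c b := _root_.trans
  have : r c b → r b a → r c a := _root_.trans
  have : r a b → r b a → a = b := antisymm
  have : r a c → r c a → a = c := antisymm
  have : r b c → r c b → b = c := antisymm
  unfold O1Shape O3Shape O2Shape IsAntichainShape IsVeeShape IsWedgeShape IsChainShape
    IsEdgeShape
  by_cases r a b <;> by_cases r b a <;> by_cases r a c <;> by_cases r c a <;>
    by_cases r b c <;> by_cases r c b <;> simp_all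

end Shapes

section Rotation

variable {r r' : P → P → Prop} {A C : Set P} {a b c : P}

lemma RotOK.trichotomy (h : RotOK r A C) (x : P) :
    (x ∈ A ∧ x ∉ C) ∨ (x ∉ A ∧ x ∈ C) ∨ (x ∉ A ∧ x ∉ C) := by
  by_cases hA : x ∈ A
  · exact Or.inl ⟨hA, Set.disjoint_left.mp h.1 hA⟩
  · by_cases hC : x ∈ C <;> simp [hA, hC]

lemma RotOK.constraints (h : RotOK r A C) (x y : P) :
    (y ∈ A → r x y → x ∈ A) ∧ (x ∈ C → r x y → y ∈ C) ∧ (x ∈ A → y ∈ C → r x y) :=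
  ⟨fun hy hxy => h.2.1 hy hxy, fun hx hxy => h.2.2.1 hx hxy, fun hx hy => (h.2.2.2 x hx y hy).1⟩

lemma RotStep.o1Shape (h : RotStep r r') (hs : O1Shape r a b c) : O1Shape r' a b c := by
  obtain ⟨A, C, hok, rfl⟩ := h
  have := hok.constraints a b; have := hok.constraints b a; have := hok.constraints a c
  have := hok.constraints c a; have := hok.constraints b c; have := hok.constraints c b
  unfold O1Shape IsAntichainShape IsVeeShape IsWedgeShape at *
  rcases hs with ⟨_, _, _, _, _, _⟩ | ⟨_, _, _, _, _, _⟩ | ⟨_, _, _, _, _, _⟩ |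
    ⟨_, _, _, _, _, _⟩ | ⟨_, _, _, _, _, _⟩ | ⟨_, _, _, _, _, _⟩ | ⟨_, _, _, _, _, _⟩ <;>
  rcases hok.trichotomy a with ⟨_, _⟩ | ⟨_, _⟩ | ⟨_, _⟩ <;>
  rcases hok.trichotomy b with ⟨_, _⟩ | ⟨_, _⟩ | ⟨_, _⟩ <;>
  rcases hok.trichotomy c with ⟨_, _⟩ | ⟨_, _⟩ | ⟨_, _⟩ <;>
  simp_all [Rot, Incomp]

lemma RotStep.o2Shape (h : RotStep r r') (hs : O2Shape r a b c) : O2Shape r' a b c := by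
  obtain ⟨A, C, hok, rfl⟩ := h
  have := hok.constraints a b; have := hok.constraints b a; have := hok.constraints a c
  have := hok.constraints c a; have := hok.constraints b c; have := hok.constraints c b
  unfold O2Shape IsChainShape IsEdgeShape at *
  rcases hs with ⟨_, _, _, _, _, _⟩ | ⟨_, _, _, _, _, _⟩ | ⟨_, _, _, _, _, _⟩ |
    ⟨_, _, _, _, _, _⟩ | ⟨_, _, _, _, _, _⟩ | ⟨_, _, _, _, _, _⟩ <;>
  rcases hok.trichotomy a with ⟨_, _⟩ | ⟨_, _⟩ | ⟨_, _⟩ <;>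
  rcases hok.trichotomy b with ⟨_, _⟩ | ⟨_, _⟩ | ⟨_, _⟩ <;>
  rcases hok.trichotomy c with ⟨_, _⟩ | ⟨_, _⟩ | ⟨_, _⟩ <;>
  simp_all [Rot, Incomp]

lemma RotStep.o3Shape (h : RotStep r r') (hs : O3Shape r a b c) : O3Shape r' a b c :=
  h.o2Shape hs

lemma RotEquiv.preserves {Φ : (P → P → Prop) → Prop} (hΦ : ∀ ⦃s s'⦄, RotStep s s' → Φ s → Φ s')
    (h : RotEquiv r r') (hr : Φ r) : Φ r' := by
  induction h with
  | refl => exact hr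
  | tail _ hstep ih => exact hΦ hstep ih

lemma RotEquiv.shapes_of_restrictRel
    (h : RotEquiv (restrictRel r {a, b, c}) (restrictRel r' {a, b, c})) :
    (O1Shape r a b c → O1Shape r' a b c) ∧ (O2Shape r a b c → O2Shape r' a b c) ∧
      (O3Shape r a b c → O3Shape r' a b c) := by
  let a' : ({a, b, c} : Set P) := ⟨a, by simp⟩
  let b' : ({a, b, c} : Set P) := ⟨b, by simp⟩
  let c' : ({a, b, c} : Set P) := ⟨c, by simp⟩
  exact ⟨h.preserves (Φ := fun s => O1Shape s a' b' c') fun _ _ hs => hs.o1Shape,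
    h.preserves (Φ := fun s => O2Shape s a' b' c') fun _ _ hs => hs.o2Shape,
    h.preserves (Φ := fun s => O3Shape s a' b' c') fun _ _ hs => hs.o3Shape⟩

lemma o2Shape_iff_and_o3Shape_iff [IsPartialOrder P r] [IsPartialOrder P r']
    (hab : a ≠ b) (hac : a ≠ c) (hbc : b ≠ c)
    (h : (O1Shape r a b c → O1Shape r' a b c) ∧ (O2Shape r a b c → O2Shape r' a b c) ∧
      (O3Shape r a b c → O3Shape r' a b c)) :
    (O2Shape r a b c ↔ O2Shape r' a b c) ∧ (O3Shape r a b c ↔ O3Shape r' a b c) := by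
  obtain ⟨h1, h2, h3⟩ := h
  refine ⟨⟨h2, fun h' => ?_⟩, ⟨h3, fun h' => ?_⟩⟩ <;>
    rcases o1Shape_or_o2Shape_or_o3Shape (r := r) hab hac hbc with hs | hs | hs
  · exact absurd h' (h1 hs).not_o2Shape
  · exact hs
  · exact absurd (h3 hs) h'.not_o3Shape
  · exact absurd h' (h1 hs).not_o3Shape
  · exact absurd h' (h2 hs).not_o3Shape
  · exact hs

end Rotation

section Maximal

variable [Finite P] (r : P → P → Prop) [IsPartialOrder P r]

lemma exists_maximal_of_isPartialOrder {S : Set P} (hS : S.Nonempty) :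
    ∃ x ∈ S, ∀ y ∈ S, r x y → y = x := by
  let _ : PartialOrder P :=
    { le := r
      le_refl := refl_of r
      le_trans := fun _ _ _ => _root_.trans
      le_antisymm := fun _ _ => antisymm }
  obtain ⟨x, hx, hmax⟩ := S.toFinite.exists_maximal hS
  exact ⟨x, hx, fun y hy hxy => le_antisymm (hmax hy hxy) hxy⟩

lemma exists_mem_maxSet_of_isPartialOrder (x : P) : ∃ m ∈ maxSet r, r x m := by
  obtain ⟨m, hxm, hmax⟩ := exists_maximal_of_isPartialOrder r (S := {y | r x y}) ⟨x, refl_of r x⟩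
  exact ⟨m, fun y hmy => hmax y (_root_.trans hxm hmy) hmy, hxm⟩

end Maximal

def TripleClassesAgree (le le' : P → P → Prop) : Prop :=
  ∀ a b c, a ≠ b → a ≠ c → b ≠ c →
    (O2Shape le a b c ↔ O2Shape le' a b c) ∧ (O3Shape le a b c ↔ O3Shape le' a b c)

lemma TripleClassesAgree.symm {le le' : P → P → Prop} (h : TripleClassesAgree le le') :
    TripleClassesAgree le' le :=
  fun a b c hab hac hbc => ⟨(h a b c hab hac hbc).1.symm, (h a b c hab hac hbc).2.symm⟩

section Agree

variable [Finite P] {le le' : P → P → Prop} [IsPartialOrder P le] [IsPartialOrder P le']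

lemma le'_of_le_of_mem_maxSet (hmax : maxSet le = maxSet le') (hO : TripleClassesAgree le le')
    {m : P} (hm : m ∈ maxSet le) {x : P} (hxm : le x m) : le' x m := by
  by_contra hxm'
  obtain ⟨x, ⟨hxm, hxm'⟩, hx⟩ :=
    exists_maximal_of_isPartialOrder le (S := {x | le x m ∧ ¬ le' x m}) ⟨x, hxm, hxm'⟩
  have hm' : m ∈ maxSet le' := hmax ▸ hm
  have hxm_ne : x ≠ m := by rintro rfl; exact hxm' (refl_of le' x)
  obtain ⟨w, hxw, hwx⟩ : ∃ w, le' x w ∧ w ≠ x := by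
    by_contra! h
    exact hxm_ne.symm ((hmax ▸ (h · ·) : x ∈ maxSet le) m hxm)
  have hwm : w ≠ m := by rintro rfl; exact hxm' hxw
  have hwm' : ¬ le' w m := fun h => hxm' (_root_.trans hxw h)
  -- in `le'` the triple is the single relation `x < w` with `m` isolated
  have hedge : O3Shape le' x m w := Or.inr <| Or.inr <| Or.inr <| Or.inr <| Or.inr
    ⟨hxw, fun h => hwx (antisymm h hxw), hxm', fun h => hxm_ne (hm' x h), hwm',
      fun h => hwm (hm' w h)⟩
  have hchain : IsChainShape le x w m := by
    have hmx : ¬ le m x := fun h => hxm_ne (hm x h)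
    have := (hO x m w hxm_ne hwx.symm hwm.symm).2.mpr hedge
    simp only [O3Shape, O2Shape, IsChainShape, IsEdgeShape] at this ⊢
    tauto
  exact hwx (hx w ⟨hchain.2.1, hwm'⟩ hchain.1)

lemma le'_of_le (hmax : maxSet le = maxSet le') (hO : TripleClassesAgree le le')
    {x y : P} (hxy : le x y) : le' x y := by
  obtain ⟨m, hm, hym⟩ := exists_mem_maxSet_of_isPartialOrder le y
  rcases eq_or_ne y m with rfl | hy
  · exact le'_of_le_of_mem_maxSet hmax hO hm hxy
  rcases eq_or_ne x y with rfl | hx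
  · exact refl_of le' x
  have hxm : x ≠ m := by rintro rfl; exact hx (antisymm hxy hym)
  have hmx' : ¬ le' m x := fun h => hxm ((hmax ▸ hm : m ∈ maxSet le') x h)
  have hxm' := le'_of_le_of_mem_maxSet hmax hO hm (_root_.trans hxy hym)
  have hchain : IsChainShape le x y m :=
    ⟨hxy, hym, _root_.trans hxy hym, fun h => hx (antisymm hxy h),
      fun h => hy (hm y h), fun h => hxm (hm x h)⟩
  have := (hO x y m hx hxm hy).1.mp (Or.inl hchain)
  simp only [O2Shape, IsChainShape, IsEdgeShape] at this
  tauto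

end Agree

theorem stmt8 [Fintype P] (le le' : P → P → Prop)
    [IsPartialOrder P le] [IsPartialOrder P le']
    (hmax : maxSet le = maxSet le')
    (h3 : ∀ a b c : P,
      RotEquiv (restrictRel le {a, b, c}) (restrictRel le' {a, b, c})) :
    le = le' := by
  have hO : TripleClassesAgree le le' := fun a b c hab hac hbc =>
    o2Shape_iff_and_o3Shape_iff hab hac hbc (h3 a b c).shapes_of_restrictRel
  funext x y
  exact propext ⟨le'_of_le hmax hO, le'_of_le hmax.symm hO.symm⟩
end

section
/- A finite poset P on {1,…,n} is rotation-equivalent to the n-element antichain if and only if P is isomorphic to the linear sum AC_s ⊕ AC_t of two (possibly empty) antichains with s + t = n. -/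
universe u

variable {P : Type u}

/-- The linear sum of an `s`-element antichain and a `t`-element antichain. -/
def linSumAC (s t : ℕ) : (Fin s ⊕ Fin t) → (Fin s ⊕ Fin t) → Prop
  | .inl i, .inl j => i = j
  | .inr i, .inr j => i = j
  | .inl _, .inr _ => True
  | .inr _, .inl _ => False

/-- `le` is (the identity on top of) a linear sum of two antichains, with
bottom block `Bot`. -/
def BotForm (le : P → P → Prop) (Bot : Set P) : Prop :=
  ∀ x y, le x y ↔ x = y ∨ (x ∈ Bot ∧ y ∉ Bot)

set_option maxHeartbeats 3000000 in
lemma rot_preserves_botform (le : P → P → Prop) (Bot : Set P) (h : BotForm le Bot)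
    (A C : Set P) (hok : RotOK le A C) :
    ∃ Bot', BotForm (Rot le A C) Bot' := by
  classical
  simp only [BotForm] at h
  obtain ⟨hd, hA, hC, h4⟩ := hok
  by_cases hAB : A ⊆ Bot
  · by_cases hCB : ∃ c ∈ C, c ∈ Bot
    · -- A must be empty, and `Botᶜ ⊆ C`
      obtain ⟨c0, hc0C, hc0B⟩ := hCB
      have hAE : ∀ a, a ∉ A := by
        intro a ha
        have h4' := h4 a ha c0 hc0C
        rcases (h a c0).1 h4'.1 with h1 | h2
        · exact h4'.2 h1
        · exact h2.2 hc0B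
      have hTC : ∀ y, y ∉ Bot → y ∈ C := by
        intro y hy
        exact hC hc0C ((h c0 y).2 (Or.inr ⟨hc0B, hy⟩))
      refine ⟨C ∩ Bot, fun x y => ?_⟩
      have f1 : x ∉ A := hAE x
      have f2 : y ∉ A := hAE y
      have f3 : x ∉ Bot → x ∈ C := hTC x
      have f4 : y ∉ Bot → y ∈ C := hTC y
      simp only [Rot, Incomp, h, Set.mem_inter_iff]
      by_cases hxy : x = y
      · subst hxy
        by_cases a1 : x ∈ A <;> by_cases c1 : x ∈ C <;>
          by_cases b1 : x ∈ Bot <;> simp_all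
      · have hyx : ¬ y = x := fun e => hxy e.symm
        by_cases a1 : x ∈ A <;> by_cases c1 : x ∈ C <;>
          by_cases b1 : x ∈ Bot <;> by_cases a2 : y ∈ A <;>
          by_cases c2 : y ∈ C <;> by_cases b2 : y ∈ Bot <;> simp_all
    · -- main case: `A ⊆ Bot`, `C ∩ Bot = ∅`
      push_neg at hCB
      refine ⟨C ∪ (Bot \ A), fun x y => ?_⟩
      have f1 : x ∈ A → x ∈ Bot := fun hx => hAB hx
      have f2 : y ∈ A → y ∈ Bot := fun hy => hAB hy
      have f3 : x ∈ C → x ∉ Bot := hCB x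
      have f4 : y ∈ C → y ∉ Bot := hCB y
      have f5 : x ∈ A → x ∉ C := fun hx => Set.disjoint_left.mp hd hx
      have f6 : y ∈ A → y ∉ C := fun hy => Set.disjoint_left.mp hd hy
      simp only [Rot, Incomp, h, Set.mem_union, Set.mem_diff]
      by_cases hxy : x = y
      · subst hxy
        by_cases a1 : x ∈ A <;> by_cases c1 : x ∈ C <;>
          by_cases b1 : x ∈ Bot <;> simp_all
      · have hyx : ¬ y = x := fun e => hxy e.symm
        by_cases a1 : x ∈ A <;> by_cases c1 : x ∈ C <;>
          by_cases b1 : x ∈ Bot <;> by_cases a2 : y ∈ A <;>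
          by_cases c2 : y ∈ C <;> by_cases b2 : y ∈ Bot <;> simp_all
  · -- `C` must be empty, and `Bot ⊆ A`
    rw [Set.not_subset] at hAB
    obtain ⟨a0, ha0A, ha0B⟩ := hAB
    have hCE : ∀ c, c ∉ C := by
      intro c hc
      have h4' := h4 a0 ha0A c hc
      rcases (h a0 c).1 h4'.1 with h1 | h2
      · exact h4'.2 h1
      · exact ha0B h2.1
    have hBA : ∀ y, y ∈ Bot → y ∈ A := by
      intro y hy
      exact hA ha0A ((h y a0).2 (Or.inr ⟨hy, ha0B⟩))
    refine ⟨Bot ∪ Aᶜ, fun x y => ?_⟩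
    have f1 : x ∈ Bot → x ∈ A := hBA x
    have f2 : y ∈ Bot → y ∈ A := hBA y
    have f3 : x ∉ C := hCE x
    have f4 : y ∉ C := hCE y
    simp only [Rot, Incomp, h, Set.mem_union, Set.mem_compl_iff]
    by_cases hxy : x = y
    · subst hxy
      by_cases a1 : x ∈ A <;> by_cases b1 : x ∈ Bot <;> simp_all
    · have hyx : ¬ y = x := fun e => hxy e.symm
      by_cases a1 : x ∈ A <;> by_cases b1 : x ∈ Bot <;>
        by_cases a2 : y ∈ A <;> by_cases b2 : y ∈ Bot <;> simp_all

lemma reach_botform (le le' : P → P → Prop) (h : RotEquiv le le') (Bot : Set P)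
    (hb : BotForm le Bot) : ∃ Bot', BotForm le' Bot' := by
  induction h with
  | refl => exact ⟨Bot, hb⟩
  | tail _ step ih =>
    obtain ⟨B2, hB2⟩ := ih
    obtain ⟨A, C, hok, rfl⟩ := step
    exact rot_preserves_botform _ B2 hB2 A C hok

lemma botform_to_sum {n : ℕ} (le : Fin n → Fin n → Prop) (Bot : Set (Fin n))
    (hb : BotForm le Bot) :
    ∃ s t : ℕ, s + t = n ∧ ∃ e : Fin n ≃ (Fin s ⊕ Fin t),
      ∀ x y : Fin n, le x y ↔ linSumAC s t (e x) (e y) := by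
  classical
  refine ⟨Fintype.card Bot, Fintype.card ↥(Botᶜ), ?_, ?_⟩
  · have := Fintype.card_congr (Equiv.Set.sumCompl Bot)
    simpa [Fintype.card_sum] using this
  · refine ⟨(Equiv.Set.sumCompl Bot).symm.trans
      (Equiv.sumCongr (Fintype.equivFin _) (Fintype.equivFin _)), fun x y => ?_⟩
    rw [hb x y]
    by_cases hx : x ∈ Bot <;> by_cases hy : y ∈ Bot
    · simp [Equiv.Set.sumCompl_symm_apply_of_mem, hx, hy, linSumAC,
        Subtype.ext_iff]
    · simp [Equiv.Set.sumCompl_symm_apply_of_mem,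
        Equiv.Set.sumCompl_symm_apply_of_notMem, hx, hy, linSumAC]
    · have hne : ¬ x = y := fun h => hx (h ▸ hy)
      simp [Equiv.Set.sumCompl_symm_apply_of_mem,
        Equiv.Set.sumCompl_symm_apply_of_notMem, hx, hy, hne, linSumAC]
    · simp [Equiv.Set.sumCompl_symm_apply_of_notMem, hx, hy, linSumAC,
        Subtype.ext_iff]

theorem stmt11 (n : ℕ) (le : Fin n → Fin n → Prop) [IsPartialOrder (Fin n) le] :
    RotEquiv (fun i j : Fin n => i = j) le ↔
      ∃ s t : ℕ, s + t = n ∧ ∃ e : Fin n ≃ (Fin s ⊕ Fin t),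
        ∀ x y : Fin n, le x y ↔ linSumAC s t (e x) (e y) := by
  classical
  constructor
  · intro hre
    obtain ⟨Bot, hBot⟩ := reach_botform _ le hre ∅
      (fun x y => by simp [BotForm])
    exact botform_to_sum le Bot hBot
  · rintro ⟨s, t, hst, e, he⟩
    set A : Set (Fin n) := {x | (e x).isRight} with hAdef
    have hok : RotOK (fun i j : Fin n => i = j) A ∅ := by
      refine ⟨by simp, ?_, ?_, ?_⟩
      · intro x hx y hyx; exact hyx ▸ hx
      · intro x hx y hxy; exact hxy ▸ hx
      · intro a _ c hc; exact absurd hc (Set.notMem_empty c)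
    have hrel : le = Rot (fun i j : Fin n => i = j) A ∅ := by
      funext x y
      apply propext
      rw [he x y]
      have hmemx : x ∈ A ↔ (e x).isRight := Iff.rfl
      have hmemy : y ∈ A ↔ (e y).isRight := Iff.rfl
      have heq : x = y ↔ e x = e y := (Equiv.apply_eq_iff_eq e).symm
      rcases hex : e x with i | i <;> rcases hey : e y with j | j <;>
        simp only [Rot, Incomp, Set.mem_empty_iff_false, hmemx, hmemy, hex, hey,
          Sum.isRight_inl, Sum.isRight_inr, linSumAC] <;>
        rw [hex, hey] at heq <;> simp_all <;> tauto
    exact Relation.ReflTransGen.single ⟨A, ∅, hok, hrel⟩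
end

section
/- Let (P,≤) be a poset and S, T ⊆ P antichains such that s < t for all s ∈ S, t ∈ T, and S ∪ T ≠ ∅. Then there exists a rotation R_{A,C} of (P,≤) such that the set of maximal elements of R_{A,C}(P,≤) is exactly S ∪ T. -/
universe u

variable {P : Type u}

/-!
Take `A` to be the down-closure of `S` and `C` the set of elements strictly above all of `S`
but below no element of `T`. In the rotation every element of `C` sits below every element of
`A`, so no element of `C` is maximal; an element of `A` is maximal iff it is maximal in `A`,
i.e. lies in the antichain `S`; an element of the middle block is maximal iff it lies above all
of `A` and is maximal in the middle block, and these are exactly the elements of `T`.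
If `S` is empty, the same construction applied to the pair `(T, ∅)` works.
-/

section Rotation

variable {le : P → P → Prop} {A C : Set P} {x : P}

theorem mem_maxSet_rot_iff_of_mem_left (hAC : Disjoint A C) (hx : x ∈ A) :
    x ∈ maxSet (Rot le A C) ↔ ∀ y ∈ A, le x y → y = x := by
  have hxC : x ∉ C := hAC.notMem_of_mem_left hx
  constructor
  · exact fun hmax y hy hxy => hmax y (Or.inl ⟨Or.inl ⟨hx, hy⟩, hxy⟩)
  · rintro hmax y
      (⟨⟨-, hy⟩ | ⟨hxA, -⟩ | ⟨hxC', -⟩, hxy⟩ | ⟨hxA, -⟩ | ⟨hxC', -⟩ | ⟨hxC', -⟩)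
    · exact hmax y hy hxy
    all_goals first | exact absurd hx hxA | exact absurd hxC' hxC

theorem notMem_maxSet_rot_of_mem_right (hAC : Disjoint A C) (hA : A.Nonempty) (hx : x ∈ C) :
    x ∉ maxSet (Rot le A C) := by
  obtain ⟨a, ha⟩ := hA
  intro hmax
  have hax : a = x := hmax a (Or.inr (Or.inr (Or.inl ⟨hx, ha⟩)))
  exact hAC.notMem_of_mem_left ha (hax ▸ hx)

theorem mem_maxSet_rot_iff_of_mem_middle (hA : IsDownset le A) (hxA : x ∉ A) (hxC : x ∉ C) :
    x ∈ maxSet (Rot le A C) ↔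
      (∀ a ∈ A, le a x) ∧ ∀ y, y ∉ A → y ∉ C → le x y → y = x := by
  constructor
  · intro hmax
    refine ⟨fun a ha => ?_, fun y hyA hyC hxy =>
      hmax y (Or.inl ⟨Or.inr (Or.inl ⟨hxA, hxC, hyA, hyC⟩), hxy⟩)⟩
    by_contra hax
    have hxa : ¬ le x a := fun hxa => hxA (hA ha hxa)
    exact hxA (hmax a (Or.inr (Or.inl ⟨hxA, hxC, ha, hxa, hax⟩)) ▸ ha)
  · rintro ⟨habove, hmax⟩ y (⟨⟨hxA', -⟩ | ⟨-, -, hyA, hyC⟩ | ⟨hxC', -⟩, hxy⟩ |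
        ⟨-, -, hyA, -, hyx⟩ | ⟨hxC', -⟩ | ⟨hxC', -⟩)
    · exact absurd hxA' hxA
    · exact hmax y hyA hyC hxy
    · exact absurd hxC' hxC
    · exact absurd (habove y hyA) hyx
    all_goals exact absurd hxC' hxC

end Rotation

section Construction

variable {le : P → P → Prop} [IsPartialOrder P le] {S T : Set P}

def downClosure (le : P → P → Prop) (S : Set P) : Set P := {x | ∃ s ∈ S, le x s}

def aboveNotBelow (le : P → P → Prop) (S T : Set P) : Set P :=
  {x | (∀ s ∈ S, SLT le s x) ∧ ∀ t ∈ T, ¬ le x t}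

theorem subset_downClosure : S ⊆ downClosure le S := fun s hs => ⟨s, hs, refl_of le s⟩

theorem isDownset_downClosure : IsDownset le (downClosure le S) :=
  fun _ ⟨s, hs, hxs⟩ _ hyx => ⟨s, hs, _root_.trans hyx hxs⟩

theorem slt_of_le_of_slt {a b c : P} (hab : le a b) (hbc : SLT le b c) : SLT le a c :=
  ⟨_root_.trans hab hbc.1, fun hac => hbc.2 (antisymm hbc.1 (hac ▸ hab))⟩

theorem slt_of_slt_of_le {a b c : P} (hab : SLT le a b) (hbc : le b c) : SLT le a c :=
  ⟨_root_.trans hab.1 hbc, fun hac => hab.2 (antisymm hab.1 (hac ▸ hbc))⟩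

theorem notMem_downClosure_of_forall_slt {x : P} (hx : ∀ s ∈ S, SLT le s x) :
    x ∉ downClosure le S :=
  fun ⟨s, hs, hxs⟩ => (hx s hs).2 (antisymm (hx s hs).1 hxs)

theorem IsAntichain.mem_iff_forall_le_eq_of_mem_downClosure (hS : IsAntichain le S) {x : P}
    (hx : x ∈ downClosure le S) : (∀ y ∈ downClosure le S, le x y → y = x) ↔ x ∈ S := by
  obtain ⟨s, hs, hxs⟩ := hx
  constructor
  · exact fun hmax => hmax s (subset_downClosure hs) hxs ▸ hs
  · rintro hxS y ⟨s', hs', hys'⟩ hxy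
    have hxs' : x = s' := hS.eq hxS hs' (_root_.trans hxy hys')
    exact antisymm (hxs' ▸ hys') hxy

theorem rotOK_downClosure_aboveNotBelow :
    RotOK le (downClosure le S) (aboveNotBelow le S T) := by
  refine ⟨Set.disjoint_left.mpr fun x hxA hxC => notMem_downClosure_of_forall_slt hxC.1 hxA,
    isDownset_downClosure, ?_, ?_⟩
  · exact fun x ⟨hSx, hxT⟩ y hxy =>
      ⟨fun s hs => slt_of_slt_of_le (hSx s hs) hxy,
        fun t ht hyt => hxT t ht (_root_.trans hxy hyt)⟩
  · exact fun a ⟨s, hs, has⟩ c hc => slt_of_le_of_slt has (hc.1 s hs)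

theorem maxSet_rot_downClosure_aboveNotBelow (hSne : S.Nonempty) (hS : IsAntichain le S)
    (hT : IsAntichain le T) (hST : ∀ s ∈ S, ∀ t ∈ T, SLT le s t) :
    maxSet (Rot le (downClosure le S) (aboveNotBelow le S T)) = S ∪ T := by
  obtain ⟨hAC, hA, -, -⟩ := rotOK_downClosure_aboveNotBelow (le := le) (S := S) (T := T)
  have hTA : ∀ t ∈ T, t ∉ downClosure le S :=
    fun t ht => notMem_downClosure_of_forall_slt fun s hs => hST s hs t ht
  have hTC : ∀ t ∈ T, t ∉ aboveNotBelow le S T := fun t ht hC => hC.2 t ht (refl_of le t)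
  ext x
  by_cases hxA : x ∈ downClosure le S
  · rw [mem_maxSet_rot_iff_of_mem_left hAC hxA, hS.mem_iff_forall_le_eq_of_mem_downClosure hxA]
    exact ⟨Or.inl, fun h => h.resolve_right fun hxT => hTA x hxT hxA⟩
  have hxS : x ∉ S := fun hxS => hxA (subset_downClosure hxS)
  by_cases hxC : x ∈ aboveNotBelow le S T
  · exact iff_of_false (notMem_maxSet_rot_of_mem_right hAC (hSne.mono subset_downClosure) hxC)
      fun h => h.elim hxS fun hxT => hTC x hxT hxC
  rw [mem_maxSet_rot_iff_of_mem_middle hA hxA hxC, Set.mem_union, or_iff_right hxS]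
  constructor
  · rintro ⟨habove, hmax⟩
    have hSx : ∀ s ∈ S, SLT le s x :=
      fun s hs => ⟨habove s (subset_downClosure hs), fun hsx => hxS (hsx ▸ hs)⟩
    obtain ⟨t, ht, hxt⟩ : ∃ t ∈ T, le x t := by
      by_contra! h
      exact hxC ⟨hSx, h⟩
    exact hmax t (hTA t ht) (hTC t ht) hxt ▸ ht
  · intro hxT
    refine ⟨fun a ⟨s, hs, has⟩ => _root_.trans has (hST s hs x hxT).1,
      fun y hyA hyC hxy => ?_⟩
    obtain ⟨t, ht, hyt⟩ : ∃ t ∈ T, le y t := by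
      by_contra! h
      exact hyC ⟨fun s hs => slt_of_slt_of_le (hST s hs x hxT) hxy, h⟩
    have hxt : x = t := hT.eq hxT ht (_root_.trans hxy hyt)
    exact antisymm (hxt ▸ hyt) hxy

end Construction

theorem stmt12 (le : P → P → Prop) [IsPartialOrder P le]
    (S T : Set P)
    (hS : ∀ x ∈ S, ∀ y ∈ S, x ≠ y → Incomp le x y)
    (hT : ∀ x ∈ T, ∀ y ∈ T, x ≠ y → Incomp le x y)
    (hST : ∀ s ∈ S, ∀ t ∈ T, le s t ∧ s ≠ t)
    (hne : (S ∪ T).Nonempty) :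
    ∃ A C : Set P, RotOK le A C ∧ maxSet (Rot le A C) = S ∪ T := by
  have hSa : IsAntichain le S := fun x hx y hy hxy => (hS x hx y hy hxy).1
  have hTa : IsAntichain le T := fun x hx y hy hxy => (hT x hx y hy hxy).1
  rcases S.eq_empty_or_nonempty with rfl | hSne
  · refine ⟨downClosure le T, aboveNotBelow le T ∅, rotOK_downClosure_aboveNotBelow, ?_⟩
    rw [maxSet_rot_downClosure_aboveNotBelow (by simpa using hne) hTa IsAntichain.empty
      (by simp), Set.union_empty, Set.empty_union]
  · exact ⟨_, _, rotOK_downClosure_aboveNotBelow,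
      maxSet_rot_downClosure_aboveNotBelow hSne hSa hTa hST⟩
end

section
/- For finite posets (P,≤) and (P,⪯) on the same domain, the following are equivalent: (1) (P,≤) and (P,⪯) are rotation-equivalent; (2) there is a single rotation mapping (P,≤) to (P,⪯); (3) for all a,b,c ∈ P, the induced posets ({a,b,c},≤) and ({a,b,c},⪯) are rotation-equivalent. -/
universe u

variable {P : Type u}

namespace S13

abbrev PO3 (x01 x10 x02 x20 x12 x21 : Bool) : Prop :=
  (¬(x01 ∧ x10)) ∧ (¬(x02 ∧ x20)) ∧ (¬(x12 ∧ x21)) ∧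
  (x01 → x12 → x02) ∧ (x02 → x21 → x01) ∧ (x10 → x02 → x12) ∧
  (x12 → x20 → x10) ∧ (x20 → x01 → x21) ∧ (x21 → x10 → x20)

def sltB (u v : Bool) : Bool := u && !v
def incB (u v : Bool) : Bool := !u && !v

def O1B (x01 x10 x02 x20 x12 x21 : Bool) : Bool :=
  (incB x01 x10 && incB x12 x21 && incB x02 x20) ||
  (sltB x01 x10 && sltB x02 x20 && incB x12 x21) ||
  (sltB x10 x01 && sltB x12 x21 && incB x02 x20) ||
  (sltB x20 x02 && sltB x21 x12 && incB x01 x10) ||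
  (sltB x10 x01 && sltB x20 x02 && incB x12 x21) ||
  (sltB x01 x10 && sltB x21 x12 && incB x02 x20) ||
  (sltB x02 x20 && sltB x12 x21 && incB x01 x10)

def O2B (x01 x10 x02 x20 x12 x21 : Bool) : Bool :=
  (sltB x01 x10 && sltB x12 x21) || (sltB x12 x21 && sltB x20 x02) ||
  (sltB x20 x02 && sltB x01 x10) ||
  (sltB x01 x10 && incB x02 x20 && incB x12 x21) ||
  (sltB x12 x21 && incB x10 x01 && incB x20 x02) ||
  (sltB x20 x02 && incB x21 x12 && incB x01 x10)

def O3B (x01 x10 x02 x20 x12 x21 : Bool) : Bool :=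
  O2B x21 x12 x20 x02 x10 x01

set_option synthInstance.maxSize 400000 in
set_option maxHeartbeats 8000000 in
theorem masterD : ∀ x01 x10 x02 x20 x12 x21 y01 y10 y02 y20 y12 y21 : Bool,
    PO3 x01 x10 x02 x20 x12 x21 → PO3 y01 y10 y02 y20 y12 y21 →
    O1B x01 x10 x02 x20 x12 x21 = O1B y01 y10 y02 y20 y12 y21 →
    O2B x01 x10 x02 x20 x12 x21 = O2B y01 y10 y02 y20 y12 y21 →
    O3B x01 x10 x02 x20 x12 x21 = O3B y01 y10 y02 y20 y12 y21 →
    ((x01 → x12 → x02 → y21 → y20) ∧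
    (x01 → x12 → x02 → y10 → y20) ∧
    (x01 → x12 → x02 → y21 → y10 → False) ∧
    (x01 → y10 → x02 → y20 → (x12 = y12 ∧ x21 = y21)) ∧
    (x01 → y10 → x12 = y12 → x21 = y21 → (x02 ∧ ¬x20 ∧ y20 ∧ ¬y02)) ∧
    (x02 → y20 → ¬(x12 ∧ y21) → ¬(x01 ∧ y10) →
      (((x01 ∧ ¬y01 ∧ ¬y10) ∨ (¬x01 ∧ ¬x10 ∧ y10)) ∧
       ((x12 ∧ ¬y12 ∧ ¬y21) ∨ (¬x12 ∧ ¬x21 ∧ y21)))) ∧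
    (x02 → y20 → ((x12 ∧ ¬y12 ∧ ¬y21) ∨ (¬x12 ∧ ¬x21 ∧ y21)) →
      ((x01 ∧ ¬y01 ∧ ¬y10) ∨ (¬x01 ∧ ¬x10 ∧ y10))) ∧
    (x02 → y20 → ((x01 ∧ ¬y01 ∧ ¬y10) ∨ (¬x01 ∧ ¬x10 ∧ y10)) →
      ((x12 ∧ ¬y12 ∧ ¬y21) ∨ (¬x12 ∧ ¬x21 ∧ y21))) ∧
    (x02 → y20 → x12 → y21 → (x01 = y01 ∧ x10 = y10)) ∧
    (((x02 ∧ ¬y02 ∧ ¬y20) ∨ (¬x02 ∧ ¬x20 ∧ y20)) →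
     ((x12 ∧ ¬y12 ∧ ¬y21) ∨ (¬x12 ∧ ¬x21 ∧ y21)) →
      (x01 = y01 ∧ x10 = y10)) ∧
    (¬(x01 ∧ y10) → ¬(x10 ∧ y01) → ¬(x02 ∧ y20) → ¬(x20 ∧ y02) → ¬(x12 ∧ y21) → ¬(x21 ∧ y12) →
      ((x01 → ((x12 ∧ ¬y12 ∧ ¬y21) ∨ (¬x12 ∧ ¬x21 ∧ y21)) →
         ((x02 ∧ ¬y02 ∧ ¬y20) ∨ (¬x02 ∧ ¬x20 ∧ y20))) ∧
      (((x02 ∧ ¬y02 ∧ ¬y20) ∨ (¬x02 ∧ ¬x20 ∧ y20)) → x01 → y01 →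
         ((x12 ∧ ¬y12 ∧ ¬y21) ∨ (¬x12 ∧ ¬x21 ∧ y21))) ∧
      (((x02 ∧ ¬y02 ∧ ¬y20) ∨ (¬x02 ∧ ¬x20 ∧ y20)) → ¬x01 → ¬x10 → ¬y01 → ¬y10 →
         ((x12 ∧ ¬y12 ∧ ¬y21) ∨ (¬x12 ∧ ¬x21 ∧ y21))) ∧
      (((x01 ∧ ¬y01 ∧ ¬y10) ∨ (¬x01 ∧ ¬x10 ∧ y10)) →
       ((x12 ∧ ¬y12 ∧ ¬y21) ∨ (¬x12 ∧ ¬x21 ∧ y21)) → False)))) := by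
  decide

set_option synthInstance.maxSize 100000 in
set_option maxHeartbeats 4000000 in
theorem classMaster : ∀ x01 x10 x02 x20 x12 x21 : Bool,
    PO3 x01 x10 x02 x20 x12 x21 →
    ((O1B x01 x10 x02 x20 x12 x21 ∨ O2B x01 x10 x02 x20 x12 x21 ∨ O3B x01 x10 x02 x20 x12 x21) ∧
     ¬(O1B x01 x10 x02 x20 x12 x21 ∧ O2B x01 x10 x02 x20 x12 x21) ∧
     ¬(O1B x01 x10 x02 x20 x12 x21 ∧ O3B x01 x10 x02 x20 x12 x21) ∧
     ¬(O2B x01 x10 x02 x20 x12 x21 ∧ O3B x01 x10 x02 x20 x12 x21)) := by decide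

def rotPairB (bi bj : Fin 3) (u v : Bool) : Bool :=
  (((bi == 0 && bj == 0) || (bi == 1 && bj == 1) || (bi == 2 && bj == 2)) && u) ||
  (bi == 1 && bj == 0 && !u && !v) ||
  (bi == 2 && bj == 0) ||
  (bi == 2 && bj == 1 && !u && !v)

abbrev ROTOK3 (b0 b1 b2 : Fin 3) (x01 x10 x02 x20 x12 x21 : Bool) : Prop :=
  (x01 → b1 = 0 → b0 = 0) ∧ (x10 → b0 = 0 → b1 = 0) ∧
  (x02 → b2 = 0 → b0 = 0) ∧ (x20 → b0 = 0 → b2 = 0) ∧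
  (x12 → b2 = 0 → b1 = 0) ∧ (x21 → b1 = 0 → b2 = 0) ∧
  (x01 → b0 = 2 → b1 = 2) ∧ (x10 → b1 = 2 → b0 = 2) ∧
  (x02 → b0 = 2 → b2 = 2) ∧ (x20 → b2 = 2 → b0 = 2) ∧
  (x12 → b1 = 2 → b2 = 2) ∧ (x21 → b2 = 2 → b1 = 2) ∧
  (b0 = 0 → b1 = 2 → x01) ∧ (b1 = 0 → b0 = 2 → x10) ∧
  (b0 = 0 → b2 = 2 → x02) ∧ (b2 = 0 → b0 = 2 → x20) ∧
  (b1 = 0 → b2 = 2 → x12) ∧ (b2 = 0 → b1 = 2 → x21)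

set_option synthInstance.maxSize 400000 in
set_option maxHeartbeats 8000000 in
theorem rotMaster : ∀ (b0 b1 b2 : Fin 3) (x01 x10 x02 x20 x12 x21 : Bool),
    PO3 x01 x10 x02 x20 x12 x21 → ROTOK3 b0 b1 b2 x01 x10 x02 x20 x12 x21 →
    ((rotPairB b0 b1 x01 x10 → rotPairB b1 b2 x12 x21 → rotPairB b0 b2 x02 x20) ∧
     (O1B x01 x10 x02 x20 x12 x21 →
       O1B (rotPairB b0 b1 x01 x10) (rotPairB b1 b0 x10 x01) (rotPairB b0 b2 x02 x20)
         (rotPairB b2 b0 x20 x02) (rotPairB b1 b2 x12 x21) (rotPairB b2 b1 x21 x12)) ∧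
     (O2B x01 x10 x02 x20 x12 x21 →
       O2B (rotPairB b0 b1 x01 x10) (rotPairB b1 b0 x10 x01) (rotPairB b0 b2 x02 x20)
         (rotPairB b2 b0 x20 x02) (rotPairB b1 b2 x12 x21) (rotPairB b2 b1 x21 x12)) ∧
     (O3B x01 x10 x02 x20 x12 x21 →
       O3B (rotPairB b0 b1 x01 x10) (rotPairB b1 b0 x10 x01) (rotPairB b0 b2 x02 x20)
         (rotPairB b2 b0 x20 x02) (rotPairB b1 b2 x12 x21) (rotPairB b2 b1 x21 x12))) := by
  decide

end S13

namespace S13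

variable {P : Type u}

noncomputable def decP (p : Prop) : Bool := @decide p (Classical.propDecidable p)

@[simp] lemma decP_iff {p : Prop} : decP p = true ↔ p := by
  simp [decP]

@[simp] lemma decP_false {p : Prop} : decP p = false ↔ ¬ p := by
  simp [decP]

@[simp] lemma decP_inj {p q : Prop} : (decP p = decP q) ↔ (p ↔ q) := by
  by_cases hp : p <;> by_cases hq : q <;> simp [decP, hp, hq]

lemma bool_eq_of_iff {a b : Bool} (h : a = true ↔ b = true) : a = b := by
  cases a <;> cases b <;> simp_all

/-- partial order, as a bare relation -/
def POr (r : P → P → Prop) : Prop :=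
  (∀ x, r x x) ∧ (∀ x y, r x y → r y x → x = y) ∧ (∀ x y z, r x y → r y z → r x z)

lemma PO3_decP {r : P → P → Prop} (hr : POr r) {a b c : P}
    (hab : a ≠ b) (hac : a ≠ c) (hbc : b ≠ c) :
    PO3 (decP (r a b)) (decP (r b a)) (decP (r a c)) (decP (r c a)) (decP (r b c)) (decP (r c b)) := by
  obtain ⟨hrefl, hanti, htr⟩ := hr
  refine ⟨?_, ?_, ?_, ?_, ?_, ?_, ?_, ?_, ?_⟩ <;> simp only [decP_iff]
  · exact fun ⟨h, h'⟩ => hab (hanti _ _ h h')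
  · exact fun ⟨h, h'⟩ => hac (hanti _ _ h h')
  · exact fun ⟨h, h'⟩ => hbc (hanti _ _ h h')
  · exact fun h h' => htr _ _ _ h h'
  · exact fun h h' => htr _ _ _ h h'
  · exact fun h h' => htr _ _ _ h h'
  · exact fun h h' => htr _ _ _ h h'
  · exact fun h h' => htr _ _ _ h h'
  · exact fun h h' => htr _ _ _ h h'

lemma slt_iff {r : P → P → Prop} (hanti : ∀ x y, r x y → r y x → x = y) {x y : P} (hne : x ≠ y) :
    SLT r x y ↔ (r x y ∧ ¬ r y x) := by
  constructor
  · rintro ⟨h, hne'⟩; exact ⟨h, fun h' => hne' (hanti _ _ h h')⟩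
  · rintro ⟨h, hn⟩; exact ⟨h, hne⟩

lemma O1B_decP {r : P → P → Prop} (hanti : ∀ x y, r x y → r y x → x = y) {a b c : P}
    (hab : a ≠ b) (hac : a ≠ c) (hbc : b ≠ c) :
    O1B (decP (r a b)) (decP (r b a)) (decP (r a c)) (decP (r c a)) (decP (r b c)) (decP (r c b)) = true
      ↔ O1rel r a b c := by
  rw [O1rel]
  simp only [sltB, incB, O1B, Bool.or_eq_true, Bool.and_eq_true, Bool.not_eq_true',
    decP_iff, decP_false, Incomp,
    slt_iff hanti hab, slt_iff hanti hab.symm, slt_iff hanti hac, slt_iff hanti hac.symm,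
    slt_iff hanti hbc, slt_iff hanti hbc.symm]
  simp only [and_assoc, or_assoc]

lemma O2B_decP {r : P → P → Prop} (hanti : ∀ x y, r x y → r y x → x = y) {a b c : P}
    (hab : a ≠ b) (hac : a ≠ c) (hbc : b ≠ c) :
    O2B (decP (r a b)) (decP (r b a)) (decP (r a c)) (decP (r c a)) (decP (r b c)) (decP (r c b)) = true
      ↔ O2rel r a b c := by
  rw [O2rel]
  simp only [sltB, incB, O2B, Bool.or_eq_true, Bool.and_eq_true, Bool.not_eq_true',
    decP_iff, decP_false, Incomp,
    slt_iff hanti hab, slt_iff hanti hab.symm, slt_iff hanti hac, slt_iff hanti hac.symm,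
    slt_iff hanti hbc, slt_iff hanti hbc.symm]
  simp only [and_assoc, or_assoc]

lemma O3B_decP {r : P → P → Prop} (hanti : ∀ x y, r x y → r y x → x = y) {a b c : P}
    (hab : a ≠ b) (hac : a ≠ c) (hbc : b ≠ c) :
    O3B (decP (r a b)) (decP (r b a)) (decP (r a c)) (decP (r c a)) (decP (r b c)) (decP (r c b)) = true
      ↔ O3rel r a b c := by
  rw [O3rel, O3B]
  exact O2B_decP hanti hbc.symm hac.symm hab.symm

end S13

namespace S13

variable {P : Type u}

/-- `x` is in a strictly lower rotation block than `y`: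
either `x < y` became incomparable, or incomparable became `y <' x`. -/
abbrev LwP (r r' : P → P → Prop) (x y : P) : Prop :=
  (r x y ∧ ¬ r' x y ∧ ¬ r' y x) ∨ (¬ r x y ∧ ¬ r y x ∧ r' y x)

theorem Dall {r r' : P → P → Prop} (hr : POr r) (hr' : POr r') {a b c : P}
    (hab : a ≠ b) (hac : a ≠ c) (hbc : b ≠ c)
    (h1 : O1rel r a b c ↔ O1rel r' a b c)
    (h2 : O2rel r a b c ↔ O2rel r' a b c)
    (h3 : O3rel r a b c ↔ O3rel r' a b c) :
    ((r a b → r b c → r a c → r' c b → r' c a) ∧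
    (r a b → r b c → r a c → r' b a → r' c a) ∧
    (r a b → r b c → r a c → r' c b → r' b a → False) ∧
    (r a b → r' b a → r a c → r' c a → ((r b c ↔ r' b c) ∧ (r c b ↔ r' c b))) ∧
    (r a b → r' b a → (r b c ↔ r' b c) → (r c b ↔ r' c b) →
      (r a c ∧ ¬ r c a ∧ r' c a ∧ ¬ r' a c)) ∧
    (r a c → r' c a → ¬(r b c ∧ r' c b) → ¬(r a b ∧ r' b a) →
      (LwP r r' a b ∧ LwP r r' b c)) ∧
    (r a c → r' c a → LwP r r' b c → LwP r r' a b) ∧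
    (r a c → r' c a → LwP r r' a b → LwP r r' b c) ∧
    (r a c → r' c a → r b c → r' c b → ((r a b ↔ r' a b) ∧ (r b a ↔ r' b a))) ∧
    (LwP r r' a c → LwP r r' b c → ((r a b ↔ r' a b) ∧ (r b a ↔ r' b a))) ∧
    (¬(r a b ∧ r' b a) → ¬(r b a ∧ r' a b) → ¬(r a c ∧ r' c a) → ¬(r c a ∧ r' a c) →
     ¬(r b c ∧ r' c b) → ¬(r c b ∧ r' b c) →
      ((r a b → LwP r r' b c → LwP r r' a c) ∧
      (LwP r r' a c → r a b → r' a b → LwP r r' b c) ∧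
      (LwP r r' a c → ¬ r a b → ¬ r b a → ¬ r' a b → ¬ r' b a → LwP r r' b c) ∧
      (LwP r r' a b → LwP r r' b c → False)))) := by
  have hanti := hr.2.1
  have hanti' := hr'.2.1
  have H := masterD (decP (r a b)) (decP (r b a)) (decP (r a c)) (decP (r c a)) (decP (r b c))
    (decP (r c b)) (decP (r' a b)) (decP (r' b a)) (decP (r' a c)) (decP (r' c a))
    (decP (r' b c)) (decP (r' c b))
    (PO3_decP hr hab hac hbc) (PO3_decP hr' hab hac hbc)
    (bool_eq_of_iff ((O1B_decP hanti hab hac hbc).trans (h1.trans (O1B_decP hanti' hab hac hbc).symm)))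
    (bool_eq_of_iff ((O2B_decP hanti hab hac hbc).trans (h2.trans (O2B_decP hanti' hab hac hbc).symm)))
    (bool_eq_of_iff ((O3B_decP hanti hab hac hbc).trans (h3.trans (O3B_decP hanti' hab hac hbc).symm)))
  simp only [decP_iff, decP_false, decP_inj] at H
  exact H

end S13

namespace S13

variable {P : Type u}

open Classical in
noncomputable def blk (A C : Set P) (x : P) : Fin 3 :=
  if x ∈ A then 0 else if x ∈ C then 2 else 1

lemma blk_eq0 {A C : Set P} {x : P} : blk A C x = 0 ↔ x ∈ A := by
  unfold blk; split_ifs with h1 h2 <;> simp_all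

lemma blk_eq2 {A C : Set P} (hd : Disjoint A C) {x : P} : blk A C x = 2 ↔ x ∈ C := by
  unfold blk; split_ifs with h1 h2 <;> simp_all
  exact fun h => Set.disjoint_left.mp hd h1 h

lemma blk_eq1 {A C : Set P} {x : P} : blk A C x = 1 ↔ (x ∉ A ∧ x ∉ C) := by
  unfold blk; split_ifs with h1 h2 <;> simp_all

set_option maxHeartbeats 2000000 in
lemma rot_decP {r : P → P → Prop} {A C : Set P} (hd : Disjoint A C) (x y : P) :
    Rot r A C x y ↔ rotPairB (blk A C x) (blk A C y) (decP (r x y)) (decP (r y x)) = true := by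
  rw [Rot]
  simp only [rotPairB, Bool.or_eq_true, Bool.and_eq_true, beq_iff_eq, Bool.not_eq_true',
    decP_iff, decP_false, blk_eq0, blk_eq1, blk_eq2 hd, Incomp]
  tauto

lemma rot_decP' {r : P → P → Prop} {A C : Set P} (hd : Disjoint A C) (x y : P) :
    rotPairB (blk A C x) (blk A C y) (decP (r x y)) (decP (r y x)) = decP (Rot r A C x y) :=
  bool_eq_of_iff ((rot_decP hd x y).symm.trans decP_iff.symm)

lemma ROTOK3_decP {r : P → P → Prop} {A C : Set P} (hOK : RotOK r A C) (x y z : P) :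
    ROTOK3 (blk A C x) (blk A C y) (blk A C z)
      (decP (r x y)) (decP (r y x)) (decP (r x z)) (decP (r z x)) (decP (r y z)) (decP (r z y)) := by
  obtain ⟨hd, hdown, hup, hAC⟩ := hOK
  refine ⟨?_, ?_, ?_, ?_, ?_, ?_, ?_, ?_, ?_, ?_, ?_, ?_, ?_, ?_, ?_, ?_, ?_, ?_⟩ <;>
    simp only [decP_iff, blk_eq0, blk_eq2 hd]
  · exact fun h h' => hdown h' h
  · exact fun h h' => hdown h' h
  · exact fun h h' => hdown h' h
  · exact fun h h' => hdown h' h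
  · exact fun h h' => hdown h' h
  · exact fun h h' => hdown h' h
  · exact fun h h' => hup h' h
  · exact fun h h' => hup h' h
  · exact fun h h' => hup h' h
  · exact fun h h' => hup h' h
  · exact fun h h' => hup h' h
  · exact fun h h' => hup h' h
  · exact fun h h' => (hAC _ h _ h').1
  · exact fun h h' => (hAC _ h _ h').1
  · exact fun h h' => (hAC _ h _ h').1
  · exact fun h h' => (hAC _ h _ h').1
  · exact fun h h' => (hAC _ h _ h').1
  · exact fun h h' => (hAC _ h _ h').1

lemma rot_refl {r : P → P → Prop} (hrefl : ∀ x, r x x) (A C : Set P) (x : P) :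
    Rot r A C x x := by
  rw [Rot]
  by_cases h1 : x ∈ A
  · exact Or.inl ⟨Or.inl ⟨h1, h1⟩, hrefl x⟩
  · by_cases h2 : x ∈ C
    · exact Or.inl ⟨Or.inr (Or.inr ⟨h2, h2⟩), hrefl x⟩
    · exact Or.inl ⟨Or.inr (Or.inl ⟨h1, h2, h1, h2⟩), hrefl x⟩

lemma rot_antisym {r : P → P → Prop} (hanti : ∀ x y, r x y → r y x → x = y)
    {A C : Set P} (hd : Disjoint A C) :
    ∀ x y, Rot r A C x y → Rot r A C y x → x = y := by
  intro x y hxy hyx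
  have hdl : ∀ z, z ∈ A → z ∈ C → False := fun z h h' => Set.disjoint_left.mp hd h h'
  rw [Rot] at hxy hyx
  rcases hxy with ⟨_, h⟩ | ⟨hx1, hx2, hy1, hinc⟩ | ⟨hx1, hy1⟩ | ⟨hx1, hy1, hy2, hinc⟩ <;>
  rcases hyx with ⟨_, h'⟩ | ⟨hx1', hx2', hy1', hinc'⟩ | ⟨hx1', hy1'⟩ | ⟨hx1', hy1', hy2', hinc'⟩ <;>
    first
      | exact hanti _ _ h h'
      | tauto

end S13

namespace S13

variable {P : Type u}

theorem RotFacts {r : P → P → Prop} (hr : POr r) {A C : Set P} (hOK : RotOK r A C)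
    {x y z : P} (hxy : x ≠ y) (hxz : x ≠ z) (hyz : y ≠ z) :
    (Rot r A C x y → Rot r A C y z → Rot r A C x z) ∧
    (O1rel r x y z → O1rel (Rot r A C) x y z) ∧
    (O2rel r x y z → O2rel (Rot r A C) x y z) ∧
    (O3rel r x y z → O3rel (Rot r A C) x y z) := by
  have hd := hOK.1
  have H := rotMaster (blk A C x) (blk A C y) (blk A C z)
    (decP (r x y)) (decP (r y x)) (decP (r x z)) (decP (r z x)) (decP (r y z)) (decP (r z y))
    (PO3_decP hr hxy hxz hyz) (ROTOK3_decP hOK x y z)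
  rw [rot_decP' hd x y, rot_decP' hd y x, rot_decP' hd x z, rot_decP' hd z x,
    rot_decP' hd y z, rot_decP' hd z y] at H
  have hanti := hr.2.1
  have hanti' := rot_antisym hanti hd
  obtain ⟨Ht, H1, H2, H3⟩ := H
  refine ⟨?_, ?_, ?_, ?_⟩
  · intro h1 h2
    exact decP_iff.mp (Ht (decP_iff.mpr h1) (decP_iff.mpr h2))
  · intro h
    exact (O1B_decP hanti' hxy hxz hyz).mp (H1 ((O1B_decP hanti hxy hxz hyz).mpr h))
  · intro h
    exact (O2B_decP hanti' hxy hxz hyz).mp (H2 ((O2B_decP hanti hxy hxz hyz).mpr h))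
  · intro h
    exact (O3B_decP hanti' hxy hxz hyz).mp (H3 ((O3B_decP hanti hxy hxz hyz).mpr h))

theorem POr_rot {r : P → P → Prop} (hr : POr r) {A C : Set P} (hOK : RotOK r A C) :
    POr (Rot r A C) := by
  refine ⟨rot_refl hr.1 A C, rot_antisym hr.2.1 hOK.1, ?_⟩
  intro x y z hxy hyz
  by_cases exy : x = y
  · exact exy ▸ hyz
  by_cases eyz : y = z
  · exact eyz ▸ hxy
  by_cases exz : x = z
  · exact exz ▸ rot_refl hr.1 A C x
  exact (RotFacts hr hOK exy exz eyz).1 hxy hyz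

theorem classPart {r : P → P → Prop} (hr : POr r) {a b c : P}
    (hab : a ≠ b) (hac : a ≠ c) (hbc : b ≠ c) :
    (O1rel r a b c ∨ O2rel r a b c ∨ O3rel r a b c) ∧
    ¬(O1rel r a b c ∧ O2rel r a b c) ∧ ¬(O1rel r a b c ∧ O3rel r a b c) ∧
    ¬(O2rel r a b c ∧ O3rel r a b c) := by
  have hanti := hr.2.1
  have H := classMaster (decP (r a b)) (decP (r b a)) (decP (r a c)) (decP (r c a))
    (decP (r b c)) (decP (r c b)) (PO3_decP hr hab hac hbc)
  rw [O1B_decP hanti hab hac hbc, O2B_decP hanti hab hac hbc, O3B_decP hanti hab hac hbc] at H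
  exact H

end S13

namespace S13

variable {P : Type u}

lemma restrict_step {r r' : P → P → Prop} (S : Set P) (h : RotStep r r') :
    RotStep (restrictRel r S) (restrictRel r' S) := by
  obtain ⟨A, C, ⟨hd, hdown, hup, hAC⟩, he⟩ := h
  refine ⟨Subtype.val ⁻¹' A, Subtype.val ⁻¹' C, ⟨?_, ?_, ?_, ?_⟩, ?_⟩
  · rw [Set.disjoint_left]
    intro x hx hx'
    exact Set.disjoint_left.mp hd hx hx'
  · intro x hx y hyx
    exact hdown hx hyx
  · intro x hx y hxy
    exact hup hx hxy
  · intro a ha c hc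
    exact ⟨(hAC _ ha _ hc).1, fun hh => (hAC _ ha _ hc).2 (congrArg Subtype.val hh)⟩
  · subst he
    rfl

lemma restrict_equiv {r r' : P → P → Prop} (S : Set P) (h : RotEquiv r r') :
    RotEquiv (restrictRel r S) (restrictRel r' S) := by
  induction h with
  | refl => exact Relation.ReflTransGen.refl
  | tail _ step ih => exact Relation.ReflTransGen.tail ih (restrict_step S step)

/-- classes are invariant along a rotation-equivalence of partial orders -/
lemma chainFacts {Q : Type v} {r0 r1 : Q → Q → Prop} (h : RotEquiv r0 r1) (hpo : POr r0) :
    POr r1 ∧ ∀ x y z : Q, x ≠ y → x ≠ z → y ≠ z →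
      ((O1rel r0 x y z ↔ O1rel r1 x y z) ∧ (O2rel r0 x y z ↔ O2rel r1 x y z) ∧
       (O3rel r0 x y z ↔ O3rel r1 x y z)) := by
  induction h with
  | refl => exact ⟨hpo, fun x y z _ _ _ => ⟨Iff.rfl, Iff.rfl, Iff.rfl⟩⟩
  | tail _ step ih =>
    obtain ⟨hpo1, hiff⟩ := ih
    obtain ⟨A, C, hOK, he⟩ := step
    subst he
    have hpo2 := POr_rot hpo1 hOK
    refine ⟨hpo2, fun x y z hxy hxz hyz => ?_⟩
    obtain ⟨i1, i2, i3⟩ := hiff x y z hxy hxz hyz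
    obtain ⟨_, f1, f2, f3⟩ := RotFacts hpo1 hOK hxy hxz hyz
    have p1 := classPart hpo1 (a := x) (b := y) (c := z) hxy hxz hyz
    have p2 := classPart hpo2 (a := x) (b := y) (c := z) hxy hxz hyz
    constructor
    · refine i1.trans ⟨f1, fun h1 => ?_⟩
      rcases p1.1 with h | h | h
      · exact h
      · exact absurd ⟨h1, f2 h⟩ p2.2.1
      · exact absurd ⟨h1, f3 h⟩ p2.2.2.1
    constructor
    · refine i2.trans ⟨f2, fun h2 => ?_⟩
      rcases p1.1 with h | h | h
      · exact absurd ⟨f1 h, h2⟩ p2.2.1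
      · exact h
      · exact absurd ⟨h2, f3 h⟩ p2.2.2.2
    · refine i3.trans ⟨f3, fun h3 => ?_⟩
      rcases p1.1 with h | h | h
      · exact absurd ⟨f1 h, h3⟩ p2.2.2.1
      · exact absurd ⟨f2 h, h3⟩ p2.2.2.2
      · exact h

lemma POr_restrict {r : P → P → Prop} (hr : POr r) (S : Set P) : POr (restrictRel r S) := by
  refine ⟨fun x => hr.1 x.1, fun x y h h' => Subtype.ext (hr.2.1 _ _ h h'), 
    fun x y z h h' => hr.2.2 _ _ _ h h'⟩

lemma O1_restrict {r : P → P → Prop} {S : Set P} (x y z : S) :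
    O1rel (restrictRel r S) x y z ↔ O1rel r x.1 y.1 z.1 := by
  simp [O1rel, SLT, Incomp, restrictRel, Subtype.ext_iff]

lemma O2_restrict {r : P → P → Prop} {S : Set P} (x y z : S) :
    O2rel (restrictRel r S) x y z ↔ O2rel r x.1 y.1 z.1 := by
  simp [O2rel, SLT, Incomp, restrictRel, Subtype.ext_iff]

lemma O3_restrict {r : P → P → Prop} {S : Set P} (x y z : S) :
    O3rel (restrictRel r S) x y z ↔ O3rel r x.1 y.1 z.1 :=
  O2_restrict z y x

/-- From rotation-equivalence of all restricted triples we get equality of classes. -/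
lemma cls_of_triples {le le' : P → P → Prop} (hle : POr le) (hle' : POr le')
    (h : ∀ a b c : P, RotEquiv (restrictRel le {a, b, c}) (restrictRel le' {a, b, c}))
    {a b c : P} (hab : a ≠ b) (hac : a ≠ c) (hbc : b ≠ c) :
    (O1rel le a b c ↔ O1rel le' a b c) ∧ (O2rel le a b c ↔ O2rel le' a b c) ∧
    (O3rel le a b c ↔ O3rel le' a b c) := by
  set S : Set P := {a, b, c} with hS
  have ha : a ∈ S := by simp [hS]
  have hb : b ∈ S := by simp [hS]
  have hc : c ∈ S := by simp [hS]
  set A : S := ⟨a, ha⟩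
  set B : S := ⟨b, hb⟩
  set Cc : S := ⟨c, hc⟩
  have hAB : A ≠ B := fun h => hab (congrArg Subtype.val h)
  have hAC : A ≠ Cc := fun h => hac (congrArg Subtype.val h)
  have hBC : B ≠ Cc := fun h => hbc (congrArg Subtype.val h)
  have := (chainFacts (h a b c) (POr_restrict hle S)).2 A B Cc hAB hAC hBC
  obtain ⟨i1, i2, i3⟩ := this
  refine ⟨?_, ?_, ?_⟩
  · rw [← O1_restrict (r := le) A B Cc, ← O1_restrict (r := le') A B Cc]
    · exact i1
  · rw [← O2_restrict (r := le) A B Cc, ← O2_restrict (r := le') A B Cc]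
    · exact i2
  · rw [← O3_restrict (r := le) A B Cc, ← O3_restrict (r := le') A B Cc]
    · exact i3

end S13

namespace S13

variable {P : Type u}
variable {r : P → P → Prop} {A C : Set P}

lemma rot_iff_AA (hd : Disjoint A C) {x y : P} (hx : x ∈ A) (hy : y ∈ A) : Rot r A C x y ↔ r x y := by
  have h1 := Set.disjoint_left.mp hd hx
  rw [Rot]; tauto

lemma rot_iff_BB (hd : Disjoint A C) {x y : P} (hx1 : x ∉ A) (hx2 : x ∉ C) (hy1 : y ∉ A) (hy2 : y ∉ C) :
    Rot r A C x y ↔ r x y := by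
  rw [Rot]; tauto

lemma rot_iff_CC (hd : Disjoint A C) {x y : P} (hx : x ∈ C) (hy : y ∈ C) : Rot r A C x y ↔ r x y := by
  have h1 := Set.disjoint_right.mp hd hx
  have h2 := Set.disjoint_right.mp hd hy
  rw [Rot]; tauto

lemma rot_iff_AB (hd : Disjoint A C) {x y : P} (hx : x ∈ A) (hy1 : y ∉ A) (hy2 : y ∉ C) : ¬ Rot r A C x y := by
  have h1 := Set.disjoint_left.mp hd hx
  rw [Rot]; tauto

lemma rot_iff_AC (hd : Disjoint A C) {x y : P} (hx : x ∈ A) (hy : y ∈ C) : ¬ Rot r A C x y := by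
  have h1 := Set.disjoint_left.mp hd hx
  have h2 := Set.disjoint_right.mp hd hy
  rw [Rot]; tauto

lemma rot_iff_BC (hd : Disjoint A C) {x y : P} (hx1 : x ∉ A) (hx2 : x ∉ C) (hy : y ∈ C) : ¬ Rot r A C x y := by
  have h2 := Set.disjoint_right.mp hd hy
  rw [Rot]; tauto

lemma rot_iff_BA (hd : Disjoint A C) {x y : P} (hx1 : x ∉ A) (hx2 : x ∉ C) (hy : y ∈ A) :
    Rot r A C x y ↔ Incomp r x y := by
  have h1 := Set.disjoint_left.mp hd hy
  rw [Rot]; tauto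

lemma rot_iff_CA (hd : Disjoint A C) {x y : P} (hx : x ∈ C) (hy : y ∈ A) : Rot r A C x y := by
  rw [Rot]; tauto

lemma rot_iff_CB (hd : Disjoint A C) {x y : P} (hx : x ∈ C) (hy1 : y ∉ A) (hy2 : y ∉ C) :
    Rot r A C x y ↔ Incomp r x y := by
  have h2 := Set.disjoint_right.mp hd hx
  rw [Rot]; tauto

end S13

namespace S13

variable {P : Type u}

theorem constructII {le le' : P → P → Prop} (hle : POr le) (hle' : POr le')
    (hcls : ∀ a b c : P, a ≠ b → a ≠ c → b ≠ c →
      ((O1rel le a b c ↔ O1rel le' a b c) ∧ (O2rel le a b c ↔ O2rel le' a b c) ∧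
       (O3rel le a b c ↔ O3rel le' a b c)))
    {p q : P} (hpqne : p ≠ q) (hpq : le p q) (hqp' : le' q p) :
    ∃ A C : Set P, RotOK le A C ∧ Rot le A C = le' := by
  have DD := fun (a b c : P) h1 h2 h3 => Dall hle hle' h1 h2 h3
    ((hcls a b c h1 h2 h3).1) ((hcls a b c h1 h2 h3).2.1) ((hcls a b c h1 h2 h3).2.2)
  obtain ⟨hrefl, hanti, htr⟩ := hle
  obtain ⟨hrefl', hanti', htr'⟩ := hle'
  set A : Set P := {x | x ≠ q ∧ le x q ∧ le' q x} with hA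
  set C : Set P := {x | x ≠ p ∧ le p x ∧ le' x p} with hC
  have hpA : p ∈ A := ⟨hpqne, hpq, hqp'⟩
  have hqC : q ∈ C := ⟨hpqne.symm, hpq, hqp'⟩
  -- disjointness
  have hdisj : ∀ x, x ∈ A → x ∈ C → False := by
    rintro x ⟨hxq, lxq, l'qx⟩ ⟨hxp, lpx, l'xp⟩
    exact (DD p x q hxp.symm hpqne hxq).2.2.1 lpx lxq hpq l'qx l'xp
  have hd : Disjoint A C := Set.disjoint_left.mpr (fun x h h' => hdisj x h h')
  -- downset
  have hdown : IsDownset le A := by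
    rintro x ⟨hxq, lxq, l'qx⟩ z lzx
    by_cases hzx : z = x
    · exact hzx ▸ ⟨hxq, lxq, l'qx⟩
    have hzq : z ≠ q := by
      rintro rfl
      exact hxq (hanti _ _ lxq lzx)
    have lzq : le z q := htr _ _ _ lzx lxq
    exact ⟨hzq, lzq, (DD z x q hzx hzq hxq).1 lzx lxq lzq l'qx⟩
  -- upset
  have hup : IsUpset le C := by
    rintro x ⟨hxp, lpx, l'xp⟩ z lxz
    by_cases hxz : x = z
    · exact hxz ▸ ⟨hxp, lpx, l'xp⟩
    have hzp : z ≠ p := by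
      rintro rfl
      exact hxp (hanti _ _ lxz lpx)
    have lpz : le p z := htr _ _ _ lpx lxz
    exact ⟨hzp, lpz, (DD p x z hxp.symm hzp.symm hxz).2.1 lpx lxz lpz l'xp⟩
  -- A below C
  have hAC : ∀ x ∈ A, ∀ y ∈ C, le x y ∧ le' y x ∧ ¬ le' x y ∧ ¬ le y x := by
    rintro x ⟨hxq, lxq, l'qx⟩ y ⟨hyp, lpy, l'yp⟩
    have hxy : x ≠ y := fun e => hdisj x ⟨hxq, lxq, l'qx⟩ (e ▸ ⟨hyp, lpy, l'yp⟩)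
    by_cases hyq : y = q
    · subst hyq
      exact ⟨lxq, l'qx, fun h => hxq (hanti' _ _ l'qx h).symm,
        fun h => hxq (hanti _ _ lxq h)⟩
    by_cases hxp : x = p
    · subst hxp
      exact ⟨lpy, l'yp, fun h => hyp (hanti' _ _ l'yp h),
        fun h => hyp (hanti _ _ h lpy)⟩
    have hqy : q ≠ y := fun e => hyq e.symm
    have hagree := (DD p q y hpqne (Ne.symm hyp) hqy).2.2.2.1 hpq hqp' lpy l'yp
    have h5 := (DD x q y hxq hxy hqy).2.2.2.2.1 lxq l'qx hagree.1 hagree.2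
    exact ⟨h5.1, h5.2.2.1, h5.2.2.2, h5.2.1⟩
  -- B patterns
  have hB : ∀ y, y ∉ A → y ∉ C → LwP le le' p y ∧ LwP le le' y q := by
    intro y hyA hyC
    have hyp : y ≠ p := fun e => hyA (e ▸ hpA)
    have hyq : y ≠ q := fun e => hyC (e ▸ hqC)
    have h1 : ¬(le y q ∧ le' q y) := fun ⟨u, v⟩ => hyA ⟨hyq, u, v⟩
    have h2 : ¬(le p y ∧ le' y p) := fun ⟨u, v⟩ => hyC ⟨hyp, u, v⟩
    exact (DD p y q hyp.symm hpqne hyq).2.2.2.2.2.1 hpq hqp' h1 h2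
  -- A-B pairs
  have hAB : ∀ x ∈ A, ∀ y, y ∉ A → y ∉ C → LwP le le' x y := by
    rintro x ⟨hxq, lxq, l'qx⟩ y hyA hyC
    have hxy : x ≠ y := fun e => hyA (e ▸ ⟨hxq, lxq, l'qx⟩)
    have hyq : y ≠ q := fun e => hyC (e ▸ hqC)
    exact (DD x y q hxy hxq hyq).2.2.2.2.2.2.1 lxq l'qx (hB y hyA hyC).2
  -- B-C pairs
  have hBC : ∀ y ∈ C, ∀ x, x ∉ A → x ∉ C → LwP le le' x y := by
    rintro y ⟨hyp, lpy, l'yp⟩ x hxA hxC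
    have hxy : x ≠ y := fun e => hxC (e ▸ ⟨hyp, lpy, l'yp⟩)
    have hxp : x ≠ p := fun e => hxA (e ▸ hpA)
    exact (DD p x y hxp.symm (Ne.symm hyp) hxy).2.2.2.2.2.2.2.1 lpy l'yp (hB x hxA hxC).1
  -- agreements
  have hAA : ∀ x ∈ A, ∀ y ∈ A, x ≠ y → ((le x y ↔ le' x y) ∧ (le y x ↔ le' y x)) := by
    rintro x ⟨hxq, lxq, l'qx⟩ y ⟨hyq, lyq, l'qy⟩ hxy
    exact (DD x y q hxy hxq hyq).2.2.2.2.2.2.2.2.1 lxq l'qx lyq l'qy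
  have hCC : ∀ x ∈ C, ∀ y ∈ C, x ≠ y → ((le x y ↔ le' x y) ∧ (le y x ↔ le' y x)) := by
    rintro x ⟨hxp, lpx, l'xp⟩ y ⟨hyp, lpy, l'yp⟩ hxy
    exact (DD p x y hxp.symm hyp.symm hxy).2.2.2.1 lpx l'xp lpy l'yp
  have hBB : ∀ x, x ∉ A → x ∉ C → ∀ y, y ∉ A → y ∉ C → x ≠ y →
      ((le x y ↔ le' x y) ∧ (le y x ↔ le' y x)) := by
    intro x hxA hxC y hyA hyC hxy
    have hxq : x ≠ q := fun e => hxC (e ▸ hqC)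
    have hyq : y ≠ q := fun e => hyC (e ▸ hqC)
    exact (DD x y q hxy hxq hyq).2.2.2.2.2.2.2.2.2.1 (hB x hxA hxC).2 (hB y hyA hyC).2
  refine ⟨A, C, ⟨hd, hdown, hup, fun a ha c hc =>
    ⟨(hAC a ha c hc).1, fun e => hdisj a ha (e ▸ hc)⟩⟩, ?_⟩
  funext x y
  apply propext
  by_cases hxy : x = y
  · subst hxy
    exact ⟨fun _ => hrefl' x, fun _ => rot_refl hrefl A C x⟩
  by_cases hxA : x ∈ A
  · by_cases hyA : y ∈ A
    · rw [rot_iff_AA hd hxA hyA]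
      exact (hAA x hxA y hyA hxy).1
    by_cases hyC : y ∈ C
    · have h := hAC x hxA y hyC
      exact ⟨fun h' => absurd h' (rot_iff_AC hd hxA hyC), fun h' => absurd h' h.2.2.1⟩
    · -- y ∈ B
      have h := hAB x hxA y hyA hyC
      refine ⟨fun h' => absurd h' (rot_iff_AB hd hxA hyA hyC), fun h' => ?_⟩
      rcases h with ⟨_, h1, _⟩ | ⟨_, _, h2⟩
      · exact absurd h' h1
      · exact absurd (hanti' _ _ h' h2) hxy
  by_cases hxC : x ∈ C
  · by_cases hyA : y ∈ A
    · exact ⟨fun _ => (hAC y hyA x hxC).2.1, fun _ => rot_iff_CA hd hxC hyA⟩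
    by_cases hyC : y ∈ C
    · rw [rot_iff_CC hd hxC hyC]
      exact (hCC x hxC y hyC hxy).1
    · -- y ∈ B : Rot ↔ Incomp le x y ; le' x y ↔ Incomp le x y
      rw [rot_iff_CB hd hxC hyA hyC]
      have h := hBC x hxC y hyA hyC
      constructor
      · rintro ⟨h1, h2⟩
        rcases h with ⟨h3, _, _⟩ | ⟨_, _, h4⟩
        · exact absurd h3 h2
        · exact h4
      · intro h'
        rcases h with ⟨_, _, h3⟩ | ⟨h3, h4, _⟩
        · exact absurd h' h3
        · exact ⟨h4, h3⟩
  · -- x ∈ B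
    by_cases hyA : y ∈ A
    · rw [rot_iff_BA hd hxA hxC hyA]
      have h := hAB y hyA x hxA hxC
      constructor
      · rintro ⟨h1, h2⟩
        rcases h with ⟨h3, _, _⟩ | ⟨_, _, h4⟩
        · exact absurd h3 h2
        · exact h4
      · intro h'
        rcases h with ⟨_, _, h3⟩ | ⟨h3, h4, _⟩
        · exact absurd h' h3
        · exact ⟨h4, h3⟩
    by_cases hyC : y ∈ C
    · have h := hBC y hyC x hxA hxC
      refine ⟨fun h' => absurd h' (rot_iff_BC hd hxA hxC hyC), fun h' => ?_⟩
      rcases h with ⟨_, h1, _⟩ | ⟨_, _, h2⟩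
      · exact absurd h' h1
      · exact absurd (hanti' _ _ h' h2) hxy
    · rw [rot_iff_BB hd hxA hxC hyA hyC]
      exact (hBB x hxA hxC y hyA hyC hxy).1

end S13

namespace S13

variable {P : Type u}

theorem constructIII {le le' : P → P → Prop} (hle : POr le) (hle' : POr le')
    (hcls : ∀ a b c : P, a ≠ b → a ≠ c → b ≠ c →
      ((O1rel le a b c ↔ O1rel le' a b c) ∧ (O2rel le a b c ↔ O2rel le' a b c) ∧
       (O3rel le a b c ↔ O3rel le' a b c)))
    (hnr : ∀ x y, le x y → le' y x → x = y) :
    ∃ A C : Set P, RotOK le A C ∧ Rot le A C = le' := by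
  have DD := fun (a b c : P) h1 h2 h3 => Dall hle hle' h1 h2 h3
    ((hcls a b c h1 h2 h3).1) ((hcls a b c h1 h2 h3).2.1) ((hcls a b c h1 h2 h3).2.2)
  obtain ⟨hrefl, hanti, htr⟩ := hle
  obtain ⟨hrefl', hanti', htr'⟩ := hle'
  have nr : ∀ a b : P, a ≠ b → ¬(le a b ∧ le' b a) := fun a b h ⟨u, v⟩ => h (hnr _ _ u v)
  -- the NR-block of Dall, for distinct triples
  have NR := fun (a b c : P) h1 h2 h3 =>
    (DD a b c h1 h2 h3).2.2.2.2.2.2.2.2.2.2 (nr a b h1) (nr b a h1.symm) (nr a c h2)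
      (nr c a h2.symm) (nr b c h3) (nr c b h3.symm)
  have lw_irr : ∀ x, ¬ LwP le le' x x := by
    rintro x (⟨_, h, _⟩ | ⟨h, _, _⟩)
    · exact h (hrefl' x)
    · exact h (hrefl x)
  have lw_ne : ∀ {x y}, LwP le le' x y → x ≠ y := by
    rintro x y h rfl
    exact lw_irr x h
  have lw_asym : ∀ {x y}, LwP le le' x y → LwP le le' y x → False := by
    rintro x y (⟨h1, h2, h3⟩ | ⟨h1, h2, h3⟩) (⟨g1, g2, g3⟩ | ⟨g1, g2, g3⟩)
    · obtain rfl := hanti _ _ h1 g1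
      exact h2 (hrefl' x)
    · exact g2 h1
    · exact h2 g1
    · obtain rfl := hanti' _ _ g3 h3
      exact h1 (hrefl x)
  set A : Set P := {x | ∃ y, LwP le le' x y} with hA
  -- downset
  have hdown : IsDownset le A := by
    rintro x ⟨w, hw⟩ z lzx
    by_cases hzx : z = x
    · exact hzx ▸ ⟨w, hw⟩
    by_cases hwz : w = z
    · subst hwz
      rcases hw with ⟨h1, _, _⟩ | ⟨_, h2, _⟩
      · exact absurd (hanti _ _ h1 lzx).symm hzx
      · exact absurd lzx h2
    have hxw := lw_ne hw
    exact ⟨w, (NR z x w hzx (Ne.symm hwz) hxw).1 lzx hw⟩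
  -- cross facts: x ∈ A, y ∉ A
  have crossC3 : ∀ x ∈ A, ∀ y, y ∉ A → ¬ le y x := fun x hx y hy h =>
    hy (hdown hx h)
  have crossC1 : ∀ x ∈ A, ∀ y, y ∉ A → x ≠ y → le x y → ¬ le' x y ∧ ¬ le' y x := by
    rintro x ⟨w, hw⟩ y hy hxy lxy
    refine ⟨?_, fun h => hxy (hnr _ _ lxy h)⟩
    intro l'xy
    by_cases hwy : w = y
    · subst hwy
      rcases hw with ⟨_, h2, _⟩ | ⟨h1, _, _⟩
      · exact h2 l'xy
      · exact h1 lxy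
    have hxw := lw_ne hw
    exact hy ⟨w, (NR x y w hxy hxw (Ne.symm hwy)).2.1 hw lxy l'xy⟩
  have crossC2 : ∀ x ∈ A, ∀ y, y ∉ A → x ≠ y → ¬ le x y → ¬ le y x → le' y x := by
    rintro x hx y hy hxy nlxy nlyx
    by_cases l'xy : le' x y
    · exact absurd ⟨x, Or.inr ⟨nlyx, nlxy, l'xy⟩⟩ hy
    by_cases l'yx : le' y x
    · exact l'yx
    obtain ⟨w, hw⟩ := hx
    by_cases hwy : w = y
    · subst hwy
      rcases hw with ⟨h1, _, _⟩ | ⟨_, _, h3⟩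
      · exact absurd h1 nlxy
      · exact absurd h3 l'yx
    have hxw := lw_ne hw
    exact absurd ⟨w, (NR x y w hxy hxw (Ne.symm hwy)).2.2.1 hw nlxy nlyx l'xy l'yx⟩ hy
  -- within A
  have hdisA : ∀ u ∈ A, ∀ v ∈ A, LwP le le' u v → False := by
    rintro u hu v ⟨w', hw'⟩ huv
    by_cases hw'u : w' = u
    · exact lw_asym huv (hw'u ▸ hw')
    have hvw' := lw_ne hw'
    exact (NR u v w' (lw_ne huv) (Ne.symm hw'u) hvw').2.2.2 huv hw'
  have hAA : ∀ x ∈ A, ∀ y ∈ A, x ≠ y → ((le x y ↔ le' x y) ∧ (le y x ↔ le' y x)) := by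
    intro x hx y hy hxy
    have one : ∀ u ∈ A, ∀ v ∈ A, u ≠ v → le u v → le' u v := by
      intro u hu v hv huv luv
      by_contra h
      exact hdisA u hu v hv (Or.inl ⟨luv, h, fun h' => huv (hnr _ _ luv h')⟩)
    have two : ∀ u ∈ A, ∀ v ∈ A, u ≠ v → le' u v → le u v := by
      intro u hu v hv huv l'uv
      by_contra h
      have h2 : ¬ le v u := fun h' => huv (hnr _ _ h' l'uv).symm
      exact hdisA v hv u hu (Or.inr ⟨h2, h, l'uv⟩)
    exact ⟨⟨one x hx y hy hxy, two x hx y hy hxy⟩,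
      ⟨one y hy x hx (Ne.symm hxy), two y hy x hx (Ne.symm hxy)⟩⟩
  -- within B
  have hBB : ∀ x, x ∉ A → ∀ y, y ∉ A → x ≠ y → ((le x y ↔ le' x y) ∧ (le y x ↔ le' y x)) := by
    intro x hx y hy hxy
    have one : ∀ u, u ∉ A → ∀ v, v ∉ A → u ≠ v → le u v → le' u v := by
      intro u hu v hv huv luv
      by_contra h
      exact hu ⟨v, Or.inl ⟨luv, h, fun h' => huv (hnr _ _ luv h')⟩⟩
    have two : ∀ u, u ∉ A → ∀ v, v ∉ A → u ≠ v → le' u v → le u v := by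
      intro u hu v hv huv l'uv
      by_contra h
      have h2 : ¬ le v u := fun h' => huv (hnr _ _ h' l'uv).symm
      exact hv ⟨u, Or.inr ⟨h2, h, l'uv⟩⟩
    exact ⟨⟨one x hx y hy hxy, two x hx y hy hxy⟩,
      ⟨one y hy x hx (Ne.symm hxy), two y hy x hx (Ne.symm hxy)⟩⟩
  have hd : Disjoint A (∅ : Set P) := Set.disjoint_left.mpr (fun x _ h => (Set.notMem_empty x) h)
  refine ⟨A, ∅, ⟨hd, hdown, fun x hx => absurd hx (Set.notMem_empty x),
    fun a _ c hc => absurd hc (Set.notMem_empty c)⟩, ?_⟩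
  funext x y
  apply propext
  have hyE : y ∉ (∅ : Set P) := Set.notMem_empty y
  have hxE : x ∉ (∅ : Set P) := Set.notMem_empty x
  by_cases hxy : x = y
  · subst hxy
    exact ⟨fun _ => hrefl' x, fun _ => rot_refl hrefl A ∅ x⟩
  by_cases hxA : x ∈ A
  · by_cases hyA : y ∈ A
    · rw [rot_iff_AA hd hxA hyA]
      exact (hAA x hxA y hyA hxy).1
    · -- x ∈ A, y ∈ B
      refine ⟨fun h' => absurd h' (rot_iff_AB hd hxA hyA hyE), fun h' => ?_⟩
      by_cases lxy : le x y
      · exact absurd h' (crossC1 x hxA y hyA hxy lxy).1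
      · have nlyx := crossC3 x hxA y hyA
        exact absurd (hanti' _ _ h' (crossC2 x hxA y hyA hxy lxy nlyx)) hxy
  · by_cases hyA : y ∈ A
    · rw [rot_iff_BA hd hxA hxE hyA]
      constructor
      · rintro ⟨h1, h2⟩
        exact crossC2 y hyA x hxA (Ne.symm hxy) h2 h1
      · intro h'
        have h1 : ¬ le x y := crossC3 y hyA x hxA
        have h2 : ¬ le y x := by
          intro lyx
          exact (crossC1 y hyA x hxA (Ne.symm hxy) lyx).2 h'
        exact ⟨h1, h2⟩
    · rw [rot_iff_BB hd hxA hxE hyA hyE]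
      exact (hBB x hxA y hyA hxy).1

end S13

theorem stmt13 [Fintype P] (le le' : P → P → Prop)
    [IsPartialOrder P le] [IsPartialOrder P le'] :
    (RotEquiv le le' ↔ ∃ A C : Set P, RotOK le A C ∧ Rot le A C = le') ∧
    (RotEquiv le le' ↔ ∀ a b c : P,
      RotEquiv (restrictRel le {a, b, c}) (restrictRel le' {a, b, c})) := by
  have hle : S13.POr le := ⟨fun x => refl_of le x, fun x y => antisymm_of le,
    fun x y z => trans_of le⟩
  have hle' : S13.POr le' := ⟨fun x => refl_of le' x, fun x y => antisymm_of le',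
    fun x y z => trans_of le'⟩
  have exist_of_triples :
      (∀ a b c : P, RotEquiv (restrictRel le {a, b, c}) (restrictRel le' {a, b, c})) →
        ∃ A C : Set P, RotOK le A C ∧ Rot le A C = le' := by
    intro h
    have hcl : ∀ a b c : P, a ≠ b → a ≠ c → b ≠ c →
        ((O1rel le a b c ↔ O1rel le' a b c) ∧ (O2rel le a b c ↔ O2rel le' a b c) ∧
         (O3rel le a b c ↔ O3rel le' a b c)) :=
      fun a b c h1 h2 h3 => S13.cls_of_triples hle hle' h h1 h2 h3
    by_cases hrev : ∃ p q : P, p ≠ q ∧ le p q ∧ le' q p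
    · obtain ⟨p, q, hne, hpq, hqp'⟩ := hrev
      exact S13.constructII hle hle' hcl hne hpq hqp'
    · refine S13.constructIII hle hle' hcl (fun x y u v => ?_)
      by_contra hne
      exact hrev ⟨x, y, hne, u, v⟩
  have equiv_of_exists : (∃ A C : Set P, RotOK le A C ∧ Rot le A C = le') → RotEquiv le le' := by
    rintro ⟨A, C, h, e⟩
    exact Relation.ReflTransGen.single ⟨A, C, h, e.symm⟩
  have triples_of_equiv : RotEquiv le le' → ∀ a b c : P,
      RotEquiv (restrictRel le {a, b, c}) (restrictRel le' {a, b, c}) :=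
    fun h a b c => S13.restrict_equiv _ h
  exact ⟨⟨fun h => exist_of_triples (triples_of_equiv h), equiv_of_exists⟩,
    ⟨triples_of_equiv, fun h => equiv_of_exists (exist_of_triples h)⟩⟩
end

section
/- For finite posets on a common domain, the composition of two rotations is a rotation: if (P,⪯) = R_{A',C'}(R_{A,C}(P,≤)), then there exists a single rotation R_{A'',C''} with R_{A'',C''}(P,≤) = (P,⪯). -/
universe u

variable {P : Type u}

section Aux

open Classical in
/-- Level function: `A ↦ 1`, `C ↦ -1`, rest `0`. -/
noncomputable def lev (A C : Set P) (x : P) : ℤ :=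
  if x ∈ A then 1 else if x ∈ C then -1 else 0

/-- The "cut" relation determined by a level function. -/
def cutRel (le : P → P → Prop) (ℓ : P → ℤ) : P → P → Prop := fun x y =>
  (ℓ x = ℓ y ∧ le x y) ∨ (ℓ y = ℓ x + 1 ∧ Incomp le x y) ∨ (ℓ x + 2 ≤ ℓ y)

lemma lev_A (A C : Set P) (x : P) : x ∈ A ↔ lev A C x = 1 := by
  by_cases h : x ∈ A <;> by_cases h' : x ∈ C <;> simp [lev, h, h']

lemma lev_C {A C : Set P} (hd : Disjoint A C) (x : P) : x ∈ C ↔ lev A C x = -1 := by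
  by_cases h : x ∈ A <;> by_cases h' : x ∈ C <;> simp [lev, h, h']
  exact Set.disjoint_left.1 hd h h'

lemma lev_range (A C : Set P) (x : P) :
    lev A C x = -1 ∨ lev A C x = 0 ∨ lev A C x = 1 := by
  by_cases h : x ∈ A <;> by_cases h' : x ∈ C <;> simp [lev, h, h']

/-- Any rotation is the cut relation of the associated level function. -/
lemma rot_eq_cut (le : P → P → Prop) (A C : Set P) (ℓ : P → ℤ)
    (hA : ∀ x, x ∈ A ↔ ℓ x = 1) (hC : ∀ x, x ∈ C ↔ ℓ x = -1)
    (hB : ∀ x, ℓ x = -1 ∨ ℓ x = 0 ∨ ℓ x = 1) :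
    Rot le A C = cutRel le ℓ := by
  funext x y
  apply propext
  simp only [Rot, cutRel, hA, hC]
  rcases hB x with h1 | h1 | h1 <;> rcases hB y with h2 | h2 | h2 <;>
    simp [h1, h2] <;> tauto

/-- The facts coming out of `RotOK`, in level-function language. -/
lemma rotOK_facts (le : P → P → Prop) (A C : Set P) (h : RotOK le A C) (ℓ : P → ℤ)
    (hA : ∀ x, x ∈ A ↔ ℓ x = 1) (hC : ∀ x, x ∈ C ↔ ℓ x = -1)
    (hB : ∀ x, ℓ x = -1 ∨ ℓ x = 0 ∨ ℓ x = 1) :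
    (∀ u v, le u v → ℓ v ≤ ℓ u) ∧ (∀ u v, ℓ u = 1 → ℓ v = -1 → le u v ∧ u ≠ v) := by
  obtain ⟨hd, hdown, hup, hac⟩ := h
  constructor
  · intro u v huv
    rcases hB u with hu | hu | hu <;> rcases hB v with hv | hv | hv <;> try omega
    · have := (hC v).1 (hup ((hC u).2 hu) huv); omega
    · have := (hC v).1 (hup ((hC u).2 hu) huv); omega
    · have := (hA u).1 (hdown ((hA v).2 hv) huv); omega
  · intro u v hu hv
    exact hac u ((hA u).2 hu) v ((hC v).2 hv)

set_option maxHeartbeats 4000000 in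
/-- The master case-bash: composing two cuts is a cut of the summed levels,
together with the window, monotonicity, and extreme-pair properties. -/
lemma master (le : P → P → Prop) [IsPartialOrder P le] (ℓ δ : P → ℤ)
    (hℓ : ∀ x, ℓ x = -1 ∨ ℓ x = 0 ∨ ℓ x = 1)
    (hδ : ∀ x, δ x = -1 ∨ δ x = 0 ∨ δ x = 1)
    (hm1 : ∀ u v, le u v → ℓ v ≤ ℓ u)
    (hc1 : ∀ u v, ℓ u = 1 → ℓ v = -1 → le u v ∧ u ≠ v)
    (hm2 : ∀ u v, cutRel le ℓ u v → δ v ≤ δ u)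
    (hc2 : ∀ u v, δ u = 1 → δ v = -1 → cutRel le ℓ u v ∧ u ≠ v) :
    ∀ x y,
      (cutRel (cutRel le ℓ) δ x y ↔ cutRel le (fun z => ℓ z + δ z) x y) ∧
      (ℓ x + δ x ≤ ℓ y + δ y + 2) ∧
      (le x y → ℓ y + δ y ≤ ℓ x + δ x) ∧
      (ℓ x + δ x = ℓ y + δ y + 2 → le x y ∧ x ≠ y) := by
  intro x y
  have a1 := hm1 x y; have a2 := hm1 y x
  have b1 := hc1 x y; have b2 := hc1 y x
  have c1 := hm2 x y; have c2 := hm2 y x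
  have d1 := hc2 x y; have d2 := hc2 y x
  have anti : le x y → le y x → x = y := fun h h' => antisymm h h'
  have hre : x = y → le x y ∧ le y x := by rintro rfl; exact ⟨refl_of le x, refl_of le x⟩
  have hcg : x = y → ℓ x = ℓ y ∧ δ x = δ y := by rintro rfl; exact ⟨rfl, rfl⟩
  have hnel : ℓ x ≠ ℓ y → x ≠ y := fun h h' => h (congrArg ℓ h')
  have hned : δ x ≠ δ y → x ≠ y := fun h h' => h (congrArg δ h')
  clear hm1 hc1 hm2 hc2
  simp only [cutRel, Incomp] at c1 c2 d1 d2 ⊢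
  rcases hℓ x with h1 | h1 | h1 <;> rcases hℓ y with h2 | h2 | h2 <;>
    rcases hδ x with h3 | h3 | h3 <;> rcases hδ y with h4 | h4 | h4 <;>
    simp_all <;> tauto

lemma cut_shift (le : P → P → Prop) (f : P → ℤ) (c : ℤ) :
    cutRel le (fun x => f x - c) = cutRel le f := by
  funext x y
  apply propext
  simp only [cutRel]
  constructor <;> rintro (⟨h, h'⟩ | ⟨h, h'⟩ | h)
  · exact Or.inl ⟨by omega, h'⟩
  · exact Or.inr (Or.inl ⟨by omega, h'⟩)
  · exact Or.inr (Or.inr (by omega))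
  · exact Or.inl ⟨by omega, h'⟩
  · exact Or.inr (Or.inl ⟨by omega, h'⟩)
  · exact Or.inr (Or.inr (by omega))

end Aux

theorem stmt14 [Fintype P] (le : P → P → Prop) [IsPartialOrder P le]
    (A C A' C' : Set P) (h1 : RotOK le A C) (h2 : RotOK (Rot le A C) A' C') :
    ∃ A'' C'' : Set P, RotOK le A'' C'' ∧
      Rot le A'' C'' = Rot (Rot le A C) A' C' := by
  classical
  have hA1 := lev_A A C
  have hC1 := lev_C h1.1
  have hB1 := lev_range A C
  have e1 : Rot le A C = cutRel le (lev A C) := rot_eq_cut le A C _ hA1 hC1 hB1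
  obtain ⟨hm1, hc1⟩ := rotOK_facts le A C h1 _ hA1 hC1 hB1
  have h2' : RotOK (cutRel le (lev A C)) A' C' := by rwa [e1] at h2
  have hA2 := lev_A A' C'
  have hC2 := lev_C h2'.1
  have hB2 := lev_range A' C'
  have e2 : Rot (cutRel le (lev A C)) A' C' = cutRel (cutRel le (lev A C)) (lev A' C') :=
    rot_eq_cut _ A' C' _ hA2 hC2 hB2
  obtain ⟨hm2, hc2⟩ := rotOK_facts _ A' C' h2' _ hA2 hC2 hB2
  have H := master le (lev A C) (lev A' C') hB1 hB2 hm1 hc1 hm2 hc2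
  have e3 : cutRel (cutRel le (lev A C)) (lev A' C')
      = cutRel le (fun z => lev A C z + lev A' C' z) := by
    funext x y; exact propext (H x y).1
  have W : ∀ x y : P, lev A C x + lev A' C' x ≤ lev A C y + lev A' C' y + 2 :=
    fun x y => (H x y).2.1
  have M : ∀ x y : P, le x y → lev A C y + lev A' C' y ≤ lev A C x + lev A' C' x :=
    fun x y => (H x y).2.2.1
  have E : ∀ x y : P, lev A C x + lev A' C' x = lev A C y + lev A' C' y + 2 →
      le x y ∧ x ≠ y := fun x y => (H x y).2.2.2
  by_cases hPe : Nonempty P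
  · haveI := hPe
    have hne : (Finset.univ : Finset P).Nonempty := Finset.univ_nonempty
    set m := Finset.univ.inf' hne (fun z => lev A C z + lev A' C' z) with hm
    have hmin : ∀ x : P, m ≤ lev A C x + lev A' C' x :=
      fun x => Finset.inf'_le _ (Finset.mem_univ x)
    obtain ⟨x0, -, hx0⟩ := Finset.exists_mem_eq_inf' hne (fun z => lev A C z + lev A' C' z)
    have hub : ∀ x : P, lev A C x + lev A' C' x ≤ m + 2 := by
      intro x
      have := W x x0
      omega
    refine ⟨{x | lev A C x + lev A' C' x = m + 2}, {x | lev A C x + lev A' C' x = m},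
      ⟨?_, ?_, ?_, ?_⟩, ?_⟩
    · rw [Set.disjoint_left]
      intro a ha ha'
      simp only [Set.mem_setOf_eq] at ha ha'
      omega
    · intro x hx y hyx
      simp only [Set.mem_setOf_eq] at hx ⊢
      have := M y x hyx
      have := hub y
      omega
    · intro x hx y hxy
      simp only [Set.mem_setOf_eq] at hx ⊢
      have := M x y hxy
      have := hmin y
      omega
    · intro a ha c hc
      simp only [Set.mem_setOf_eq] at ha hc
      exact E a c (by omega)
    · have hA'' : ∀ x, x ∈ {x | lev A C x + lev A' C' x = m + 2} ↔
          lev A C x + lev A' C' x - (m + 1) = 1 := by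
        intro x; simp only [Set.mem_setOf_eq]; omega
      have hC'' : ∀ x, x ∈ {x | lev A C x + lev A' C' x = m} ↔
          lev A C x + lev A' C' x - (m + 1) = -1 := by
        intro x; simp only [Set.mem_setOf_eq]; omega
      have hB'' : ∀ x : P, lev A C x + lev A' C' x - (m + 1) = -1 ∨
          lev A C x + lev A' C' x - (m + 1) = 0 ∨
          lev A C x + lev A' C' x - (m + 1) = 1 := by
        intro x
        have := hmin x
        have := hub x
        omega
      calc Rot le {x | lev A C x + lev A' C' x = m + 2} {x | lev A C x + lev A' C' x = m}
          = cutRel le (fun x => (fun z => lev A C z + lev A' C' z) x - (m + 1)) :=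
            rot_eq_cut le _ _ _ hA'' hC'' hB''
        _ = cutRel le (fun z => lev A C z + lev A' C' z) :=
            cut_shift le (fun z => lev A C z + lev A' C' z) (m + 1)
        _ = cutRel (cutRel le (lev A C)) (lev A' C') := e3.symm
        _ = Rot (cutRel le (lev A C)) A' C' := e2.symm
        _ = Rot (Rot le A C) A' C' := by rw [e1]
  · refine ⟨∅, ∅, ⟨?_, ?_, ?_, ?_⟩, ?_⟩
    · simp
    · intro x hx; exact absurd hx (Set.notMem_empty x)
    · intro x hx; exact absurd hx (Set.notMem_empty x)
    · intro a ha; exact absurd ha (Set.notMem_empty a)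
    · funext x y
      exact absurd (Nonempty.intro x) hPe
end

section
/- For countably infinite posets (P,≤) and (P,⪯) on the same domain: if for all a,b,c ∈ P the induced posets ({a,b,c},≤) and ({a,b,c},⪯) are rotation-equivalent, then there exists a single rotation R_{A,C} with R_{A,C}(P,≤) = (P,⪯). (Proved from the finite case via König's lemma / compactness.) -/
universe u

variable {P : Type u}

/-!
Code the relation between `x` and `y` by `g(x, y) ∈ {0, 1, 2}` (below, incomparable, above)
and label the blocks of a rotation `R_{A,C}` by `λ = 0, 1, 2` on `A`, `B`, `C`. Then
`g_{R_{A,C}}(x, y) = g(x, y) + λ(y) - λ(x)`, so `g(x, y) + g(y, z) - g(x, z)` is invariant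
under rotations. Rotation-equivalence of all triples therefore makes `d = g' - g` a cocycle,
`d(x, y) = f(y) - f(x)` for some `f : P → ℤ`. As `|d| ≤ 2`, `f` takes values in some
`[m, m + 2]`, and the rotation with `A = f⁻¹(m)`, `C = f⁻¹(m + 2)` has block labels `f - m`,
hence code `g'`, i.e. it is `le'`. No compactness argument is needed.
-/

open Classical in
noncomputable def cmpCode (r : P → P → Prop) (x y : P) : ℤ :=
  if r x y then 0 else if r y x then 2 else 1

open Classical in
noncomputable def blockLabel (A C : Set P) (z : P) : ℤ :=
  if z ∈ A then 0 else if z ∈ C then 2 else 1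

noncomputable def cmpTriangle (r : P → P → Prop) (x y z : P) : ℤ :=
  cmpCode r x y + cmpCode r y z - cmpCode r x z

section CmpCode

variable {r s : P → P → Prop}

theorem cmpCode_eq_zero_iff {x y : P} : cmpCode r x y = 0 ↔ r x y := by
  unfold cmpCode
  split_ifs <;> simp_all

theorem cmpCode_nonneg (x y : P) : 0 ≤ cmpCode r x y := by
  unfold cmpCode
  split_ifs <;> simp

theorem cmpCode_le_two (x y : P) : cmpCode r x y ≤ 2 := by
  unfold cmpCode
  split_ifs <;> simp

theorem cmpCode_injective : Function.Injective (cmpCode : (P → P → Prop) → P → P → ℤ) := by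
  intro r s h
  funext x y
  rw [← cmpCode_eq_zero_iff (r := r), ← cmpCode_eq_zero_iff (r := s), h]

theorem cmpCode_rot {A C : Set P} (hok : RotOK r A C) (x y : P) :
    cmpCode (Rot r A C) x y = cmpCode r x y + blockLabel A C y - blockLabel A C x := by
  obtain ⟨hdisj, hdown, hup, hAC⟩ := hok
  have hxAC : x ∈ A → x ∉ C := fun h => Set.disjoint_left.mp hdisj h
  have hyAC : y ∈ A → y ∉ C := fun h => Set.disjoint_left.mp hdisj h
  have hxA : x ∈ A → r y x → y ∈ A := fun h => @hdown x h y
  have hyA : y ∈ A → r x y → x ∈ A := fun h => @hdown y h x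
  have hxC : x ∈ C → r x y → y ∈ C := fun h => @hup x h y
  have hyC : y ∈ C → r y x → x ∈ C := fun h => @hup y h x
  have hxy : x ∈ A → y ∈ C → r x y := fun h h' => (hAC x h y h').1
  have hyx : y ∈ A → x ∈ C → r y x := fun h h' => (hAC y h x h').1
  unfold cmpCode blockLabel Rot Incomp
  by_cases x ∈ A <;> by_cases y ∈ A <;> by_cases x ∈ C <;> by_cases y ∈ C <;>
    by_cases r x y <;> by_cases r y x <;> simp_all

theorem RotStep.cmpTriangle_eq (h : RotStep r s) (x y z : P) :
    cmpTriangle s x y z = cmpTriangle r x y z := by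
  obtain ⟨A, C, hok, rfl⟩ := h
  simp only [cmpTriangle, cmpCode_rot hok]
  ring

theorem RotEquiv.cmpTriangle_eq (h : RotEquiv r s) (x y z : P) :
    cmpTriangle s x y z = cmpTriangle r x y z := by
  induction h with
  | refl => rfl
  | tail _ hstep ih => rw [hstep.cmpTriangle_eq, ih]

theorem cmpTriangle_eq_of_rotEquiv_restrictRel {a b c : P}
    (h : RotEquiv (restrictRel r {a, b, c}) (restrictRel s {a, b, c})) :
    cmpTriangle s a b c = cmpTriangle r a b c :=
  h.cmpTriangle_eq ⟨a, by simp⟩ ⟨b, by simp⟩ ⟨c, by simp⟩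

end CmpCode

theorem exists_eq_sub_of_add_eq {G : Type*} [AddCommGroup G] {d : P → P → G}
    (hd : ∀ x y z, d x y + d y z = d x z) : ∃ f : P → G, ∀ x y, d x y = f y - f x := by
  rcases isEmpty_or_nonempty P with _ | ⟨⟨x₀⟩⟩
  · exact ⟨0, fun x => isEmptyElim x⟩
  · exact ⟨d x₀, fun x y => eq_sub_of_add_eq' (hd x₀ x y)⟩

theorem exists_forall_mem_Icc_of_sub_le {f : P → ℤ} {k : ℤ} (hf : ∀ x y, f y - f x ≤ k) :
    ∃ m, ∀ x, f x ∈ Set.Icc m (m + k) := by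
  rcases isEmpty_or_nonempty P with _ | ⟨⟨x₀⟩⟩
  · exact ⟨0, fun x => isEmptyElim x⟩
  obtain ⟨m, ⟨x₁, rfl⟩, hmin⟩ := Int.exists_least_of_bdd (P := (· ∈ Set.range f))
    ⟨f x₀ - k, by rintro _ ⟨x, rfl⟩; linarith [hf x x₀]⟩ ⟨f x₀, x₀, rfl⟩
  exact ⟨f x₁, fun x => ⟨hmin _ ⟨x, rfl⟩, by linarith [hf x₁ x]⟩⟩

section LevelSets

variable {r s : P → P → Prop} {f : P → ℤ} {m : ℤ}

theorem blockLabel_levelSets (hf : ∀ x, f x ∈ Set.Icc m (m + 2)) (z : P) :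
    blockLabel {x | f x = m} {x | f x = m + 2} z = f z - m := by
  obtain ⟨hlo, hhi⟩ := hf z
  unfold blockLabel
  split_ifs <;> simp only [Set.mem_ofPred_eq] at * <;> omega

theorem le_of_cmpCode_eq_add_sub (hshift : ∀ x y, cmpCode s x y = cmpCode r x y + f y - f x)
    {x y : P} (hxy : r x y) : f x ≤ f y := by
  have := hshift x y
  have := cmpCode_nonneg (r := s) x y
  rw [cmpCode_eq_zero_iff.mpr hxy] at *
  omega

theorem rotOK_levelSets (hf : ∀ x, f x ∈ Set.Icc m (m + 2))
    (hshift : ∀ x y, cmpCode s x y = cmpCode r x y + f y - f x) :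
    RotOK r {x | f x = m} {x | f x = m + 2} := by
  refine ⟨?_, ?_, ?_, ?_⟩
  · exact Set.disjoint_left.mpr fun x (hx : f x = m) (hx' : f x = m + 2) => by omega
  · intro x (hx : f x = m) y hyx
    have := le_of_cmpCode_eq_add_sub hshift hyx
    have := hf y
    simp only [Set.mem_Icc, Set.mem_ofPred_eq] at *
    omega
  · intro x (hx : f x = m + 2) y hxy
    have := le_of_cmpCode_eq_add_sub hshift hxy
    have := hf y
    simp only [Set.mem_Icc, Set.mem_ofPred_eq] at *
    omega
  · intro a (ha : f a = m) c (hc : f c = m + 2)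
    have := hshift a c
    have := cmpCode_nonneg (r := r) a c
    have := cmpCode_le_two (r := s) a c
    refine ⟨cmpCode_eq_zero_iff.mp (by omega), fun hac => ?_⟩
    subst hac
    omega

theorem rot_levelSets_eq (hf : ∀ x, f x ∈ Set.Icc m (m + 2))
    (hshift : ∀ x y, cmpCode s x y = cmpCode r x y + f y - f x) :
    Rot r {x | f x = m} {x | f x = m + 2} = s := by
  refine cmpCode_injective (funext₂ fun x y => ?_)
  rw [cmpCode_rot (rotOK_levelSets hf hshift), blockLabel_levelSets hf,
    blockLabel_levelSets hf, hshift]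
  ring

end LevelSets

theorem stmt15_general
    (le le' : P → P → Prop)
    (h3 : ∀ a b c : P,
      RotEquiv (restrictRel le {a, b, c}) (restrictRel le' {a, b, c})) :
    ∃ A C : Set P, RotOK le A C ∧ Rot le A C = le' := by
  obtain ⟨f, hf⟩ := exists_eq_sub_of_add_eq (d := fun x y => cmpCode le' x y - cmpCode le x y)
    fun x y z => by
      have := cmpTriangle_eq_of_rotEquiv_restrictRel (h3 x y z)
      simp only [cmpTriangle] at this
      linarith
  have hshift : ∀ x y, cmpCode le' x y = cmpCode le x y + f y - f x := fun x y => by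
    linarith [hf x y]
  obtain ⟨m, hm⟩ := exists_forall_mem_Icc_of_sub_le (f := f) (k := 2) fun x y => by
    linarith [hshift x y, cmpCode_nonneg (r := le) x y, cmpCode_le_two (r := le') x y]
  exact ⟨_, _, rotOK_levelSets hm hshift, rot_levelSets_eq hm hshift⟩

theorem stmt15 [Countable P] [Infinite P]
    (le le' : P → P → Prop) [IsPartialOrder P le] [IsPartialOrder P le']
    (h3 : ∀ a b c : P,
      RotEquiv (restrictRel le {a, b, c}) (restrictRel le' {a, b, c})) :
    ∃ A C : Set P, RotOK le A C ∧ Rot le A C = le' :=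
  stmt15_general le le' h3
end
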